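/- arXiv:2409.16773 — 7 statements merged into one kernel-verified Lean document; each statement's English description precedes it below -/
import Mathlib

section
/- Let d be an even natural number and h_0,…,h_d real numbers with h_k = h_{d−k} for all 0 ≤ k ≤ d, and let (γ_0,…,γ_{d/2}) be its gamma vector. Then the following identity of polynomials in ℝ[u] holds: h_{d/2} + 2·Σ_{j=1}^{d/2} h_{d/2−j}·T_j(u/2) = Σ_{i=0}^{d/2} γ_i·(u+2)^{d/2−i}. (Equivalently, the polynomial g(u) := h_{d/2} + 2Σ_{j=1}^{d/2} h_{d/2−j} T_j(u/2) satisfies (u+2)^{d/2}·γ(1/(u+2)) = g(u), an 'inverted Chebyshev basis expansion' of the gamma polynomial.) -/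
/-!
Substitute `u = z + z⁻¹` with `z > 0`, which reaches every `u ≥ 2`. Since
`2 T_j((z + z⁻¹)/2) = z^j + z^{-j}`, multiplying the left side by `z^{d/2}` gives back the
palindromic polynomial `∑ h_k z^k`, while `z (z + z⁻¹ + 2) = (1 + z)^2` turns `z^{d/2}` times the
right side into `∑ γ_i z^i (1 + z)^{d-2i}`. The gamma expansion identifies the two, and
polynomials agreeing on infinitely many points are equal.
-/

open Polynomial Finset

theorem Polynomial.Chebyshev.C_eval_add_of_mul_eq_one {R : Type*} [CommRing R] {x y : R}
    (hxy : x * y = 1) (n : ℕ) : (Chebyshev.C R n).eval (x + y) = x ^ n + y ^ n := by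
  rw [← dickson_one_one_eq_chebyshev_C, dickson_one_one_eval_add_inv x y hxy]

theorem Polynomial.Chebyshev.two_mul_T_comp_half_mul_X {K : Type*} [Field K] (h2 : (2 : K) ≠ 0)
    (n : ℤ) : 2 * (Chebyshev.T K n).comp (Polynomial.C (1 / 2) * X) = Chebyshev.C K n := by
  let := invertibleOfNonzero h2
  rw [Chebyshev.C_eq_two_mul_T_comp_half_mul_X, invOf_eq_inv, one_div]

theorem sum_range_mul_pow_of_palindromic {R : Type*} [CommSemiring R] (m : ℕ) (h : ℕ → R)
    (hsym : ∀ k ≤ m + m, h k = h (m + m - k)) (z : R) :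
    ∑ k ∈ range (m + m + 1), h k * z ^ k
      = h m * z ^ m + ∑ j ∈ Icc 1 m, h (m - j) * (z ^ (m - j) + z ^ (m + j)) := by
  have hIcc : Icc 1 m = Ico 1 (m + 1) := rfl
  have low : ∑ j ∈ Icc 1 m, h (m - j) * z ^ (m - j) = ∑ k ∈ range m, h k * z ^ k := by
    rw [hIcc, sum_Ico_eq_sum_range, ← sum_range_reflect _ m, Nat.add_sub_cancel]
    refine sum_congr rfl fun k _ => ?_
    rw [Nat.sub_sub, add_comm 1 k]
  have high : ∑ j ∈ Icc 1 m, h (m - j) * z ^ (m + j)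
      = ∑ k ∈ range m, h (m + 1 + k) * z ^ (m + 1 + k) := by
    rw [hIcc, sum_Ico_eq_sum_range, Nat.add_sub_cancel]
    refine sum_congr rfl fun k hk => ?_
    rw [hsym (m + 1 + k) (by grind), show m + m - (m + 1 + k) = m - (1 + k) by omega, add_assoc]
  rw [show m + m + 1 = m + 1 + m by ring, sum_range_add, sum_range_succ]
  simp only [mul_add, sum_add_distrib, low, high]
  ring

theorem pow_mul_add_inv_add_two_pow {K : Type*} [Field K] {z : K} (hz : z ≠ 0) (n : ℕ) :
    z ^ n * (z + z⁻¹ + 2) ^ n = (1 + z) ^ (2 * n) := by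
  rw [← mul_pow, pow_mul]
  congr 1
  field_simp
  ring

theorem pow_mul_palindromic_eq_sum_range {K : Type*} [Field K] (m : ℕ) (h : ℕ → K)
    (hsym : ∀ k ≤ m + m, h k = h (m + m - k)) {z : K} (hz : z ≠ 0) :
    z ^ m * (h m + ∑ j ∈ Icc 1 m, h (m - j) * (z ^ j + z⁻¹ ^ j))
      = ∑ k ∈ range (m + m + 1), h k * z ^ k := by
  rw [sum_range_mul_pow_of_palindromic m h hsym, mul_add, mul_sum, mul_comm]
  congr 1
  refine sum_congr rfl fun j hj => ?_
  rw [pow_sub₀ z hz (mem_Icc.mp hj).2, pow_add, inv_pow]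
  ring

theorem pow_mul_sum_add_inv_add_two_pow {K : Type*} [Field K] (m : ℕ) (γ : ℕ → K) {z : K}
    (hz : z ≠ 0) :
    z ^ m * ∑ i ∈ range (m + 1), γ i * (z + z⁻¹ + 2) ^ (m - i)
      = ∑ i ∈ range (m + 1), γ i * z ^ i * (1 + z) ^ (m + m - 2 * i) := by
  rw [mul_sum]
  refine sum_congr rfl fun i hi => ?_
  have hi : i ≤ m := Nat.lt_succ_iff.mp (mem_range.mp hi)
  rw [show m + m - 2 * i = 2 * (m - i) by omega, ← pow_mul_add_inv_add_two_pow hz,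
    ← pow_mul_pow_sub z hi]
  ring

theorem exists_pos_add_inv_eq {u : ℝ} (hu : 2 ≤ u) : ∃ z > 0, z + z⁻¹ = u := by
  have hs := Real.sq_sqrt (show 0 ≤ u ^ 2 - 4 by nlinarith)
  refine ⟨(u + √(u ^ 2 - 4)) / 2, by positivity, ?_⟩
  have hz : (u + √(u ^ 2 - 4)) / 2 ≠ 0 := by positivity
  field_simp
  linear_combination hs

/-- **Gamma vectors and inverted Chebyshev expansions.**
Let `d` be even and `h 0, …, h d` a palindromic (reciprocal) sequence of reals, with gamma
vector `γ 0, …, γ (d/2)` defined by `∑ h k t^k = ∑ γ i t^i (1+t)^(d-2i)`.  Then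
`h (d/2) + 2 ∑_{j=1}^{d/2} h (d/2 - j) · T_j(u/2) = ∑_{i=0}^{d/2} γ i · (u+2)^(d/2-i)`
as polynomials in `u`, where `T_j` is the `j`-th Chebyshev polynomial of the first kind. -/
theorem gamma_inverted_chebyshev_expansion
    (d : ℕ) (hd : Even d) (h γ : ℕ → ℝ)
    (hsym : ∀ k ≤ d, h k = h (d - k))
    (hgamma : ∑ k ∈ Finset.range (d + 1), C (h k) * X ^ k
      = ∑ i ∈ Finset.range (d / 2 + 1), C (γ i) * X ^ i * (1 + X) ^ (d - 2 * i)) :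
    C (h (d / 2)) +
        2 * ∑ j ∈ Finset.Icc 1 (d / 2),
          C (h (d / 2 - j)) * (Polynomial.Chebyshev.T ℝ (j : ℤ)).comp (C (1 / 2 : ℝ) * X)
      = ∑ i ∈ Finset.range (d / 2 + 1), C (γ i) * (X + 2) ^ (d / 2 - i) := by
  obtain ⟨m, rfl⟩ := hd
  rw [show (m + m) / 2 = m by omega] at hgamma ⊢
  simp only [mul_sum, mul_left_comm (2 : ℝ[X]), Chebyshev.two_mul_T_comp_half_mul_X two_ne_zero]
  refine eq_of_infinite_eval_eq _ _ ((Set.Ici_infinite 2).mono fun u hu => ?_)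
  obtain ⟨z, hz, rfl⟩ := exists_pos_add_inv_eq hu
  have hgamma_z := congrArg (eval z) hgamma
  simp only [eval_finsetSum, eval_mul, eval_pow, eval_add, eval_C, eval_X, eval_one] at hgamma_z
  refine mul_left_cancel₀ (pow_ne_zero m hz.ne') ?_
  simp only [eval_add, eval_C, eval_finsetSum, eval_mul, eval_pow, eval_X,
    eval_ofNat, Chebyshev.C_eval_add_of_mul_eq_one (mul_inv_cancel₀ hz.ne')]
  rw [pow_mul_palindromic_eq_sum_range m h hsym hz.ne', hgamma_z,
    pow_mul_sum_add_inv_add_two_pow m γ hz.ne']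
end

section
/- Let d be an even natural number and h_0,…,h_d real numbers with h_k = h_{d−k} for all 0 ≤ k ≤ d, and let (γ_0,…,γ_{d/2}) be its gamma vector. Then for every 0 ≤ k ≤ d/2, the coefficient of w^k in the polynomial g(2w) := h_{d/2} + 2·Σ_{j=1}^{d/2} h_{d/2−j}·T_j(w) equals Σ_{j=k}^{d/2} γ_{d/2−j}·2^j·C(j,k), where C(j,k) is the binomial coefficient. -/
open Polynomial Finset

/-! For `x > 0` put `w = (x + x⁻¹) / 2`. Then `2 T_j(w) = x^j + x^(-j)` and `(1 + x)^2 = 2x(1 + w)`,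
so after multiplying by `x^(d/2)` both the Chebyshev expression `g(2w)` (by palindromicity) and
`∑ γ (d/2 - j) 2^j (1 + w)^j` (by the gamma expansion) evaluate to `∑ h k x^k`. These `w` form an
infinite set, so the two polynomials are equal, and the coefficients of the second are binomial. -/

theorem sum_range_two_mul_add_one_eq_add_sum_Icc {M : Type*} [AddCommMonoid M] (f : ℕ → M)
    (n : ℕ) : ∑ k ∈ range (2 * n + 1), f k = f n + ∑ j ∈ Icc 1 n, (f (n - j) + f (n + j)) := by
  induction n generalizing f with
  | zero => simp
  | succ n ih =>
    rw [show 2 * (n + 1) + 1 = 2 * n + 1 + 1 + 1 by ring, sum_range_succ, sum_range_succ',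
      ih, sum_Icc_succ_top (by omega)]
    have hshift : ∀ j ∈ Icc 1 n,
        f (n - j + 1) + f (n + j + 1) = f (n + 1 - j) + f (n + 1 + j) := by
      intro j hj
      rw [mem_Icc] at hj
      rw [show n - j + 1 = n + 1 - j by omega, add_right_comm]
    rw [sum_congr rfl hshift, Nat.sub_self, show n + 1 + (n + 1) = 2 * n + 1 + 1 by ring]
    abel

section CommRing

variable {R : Type*} [CommRing R] {x y w : R}

theorem Polynomial.Chebyshev.two_mul_T_eval_of_two_mul_eq_add (hxy : x * y = 1)
    (hw : 2 * w = x + y) (j : ℕ) : 2 * (T R j).eval w = x ^ j + y ^ j := by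
  have := congrArg (eval w) (C_comp_two_mul_X R j)
  rw [eval_comp, eval_mul, eval_ofNat, eval_X, hw, ← dickson_one_one_eq_chebyshev_C,
    dickson_one_one_eval_add_inv x y hxy, eval_mul, eval_ofNat] at this
  exact this.symm

theorem pow_mul_pow_add_pow_of_mul_eq_one (hxy : x * y = 1) {j n : ℕ} (hj : j ≤ n) :
    x ^ n * (x ^ j + y ^ j) = x ^ (n - j) + x ^ (n + j) := by
  obtain ⟨m, rfl⟩ := Nat.exists_eq_add_of_le hj
  rw [Nat.add_sub_cancel_left, mul_add, ← pow_add, pow_add x j m, mul_right_comm, ← mul_pow, hxy,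
    one_pow, one_mul]
  ring

theorem pow_mul_two_mul_one_add_pow (hxy : x * y = 1) (hw : 2 * w = x + y) {j n : ℕ}
    (hj : j ≤ n) : x ^ n * (2 * (1 + w)) ^ j = x ^ (n - j) * (1 + x) ^ (2 * j) := by
  have hsq : x * (2 * (1 + w)) = (1 + x) ^ 2 := by linear_combination x * hw + hxy
  calc x ^ n * (2 * (1 + w)) ^ j = x ^ (n - j) * (x * (2 * (1 + w))) ^ j := by
        rw [mul_pow x, ← mul_assoc, ← pow_add, Nat.sub_add_cancel hj]
    _ = x ^ (n - j) * (1 + x) ^ (2 * j) := by rw [hsq, ← pow_mul]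

theorem pow_mul_eval_chebyshev_sum (h : ℕ → R) {n : ℕ} (hsym : ∀ k ≤ 2 * n, h k = h (2 * n - k))
    (hxy : x * y = 1) (hw : 2 * w = x + y) :
    x ^ n * (C (h n) + 2 * ∑ j ∈ Icc 1 n, C (h (n - j)) * Chebyshev.T R (j : ℤ)).eval w
      = ∑ k ∈ range (2 * n + 1), h k * x ^ k := by
  have hterm : ∀ j ∈ Icc 1 n, x ^ n * (h (n - j) * (2 * (Chebyshev.T R j).eval w))
      = h (n - j) * x ^ (n - j) + h (n + j) * x ^ (n + j) := by
    intro j hj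
    have hj : j ≤ n := (mem_Icc.1 hj).2
    rw [Chebyshev.two_mul_T_eval_of_two_mul_eq_add hxy hw, mul_left_comm,
      pow_mul_pow_add_pow_of_mul_eq_one hxy hj, hsym (n + j) (by omega),
      show 2 * n - (n + j) = n - j by omega]
    ring
  rw [sum_range_two_mul_add_one_eq_add_sum_Icc, ← sum_congr rfl hterm]
  simp only [eval_add, eval_C, eval_mul, eval_ofNat, eval_finsetSum, mul_sum, mul_add]
  exact congrArg₂ (· + ·) (mul_comm _ _) (sum_congr rfl fun j _ => by ring)

theorem pow_mul_eval_sum_one_add_X_pow (γ : ℕ → R) (n : ℕ) (hxy : x * y = 1)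
    (hw : 2 * w = x + y) :
    x ^ n * (∑ j ∈ range (n + 1), C (γ (n - j) * 2 ^ j) * (1 + X) ^ j).eval w
      = ∑ i ∈ range (n + 1), γ i * x ^ i * (1 + x) ^ (2 * n - 2 * i) := by
  rw [← sum_range_reflect (fun i => γ i * x ^ i * _), eval_finsetSum, mul_sum]
  refine sum_congr rfl fun j hj => ?_
  have hj : j ≤ n := Nat.lt_succ_iff.1 (mem_range.1 hj)
  simp only [eval_mul, eval_C, eval_pow, eval_add, eval_one, eval_X, Nat.add_sub_cancel]
  rw [show 2 * n - 2 * (n - j) = 2 * j by omega]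
  have key := pow_mul_two_mul_one_add_pow hxy hw hj
  rw [mul_pow] at key
  linear_combination γ (n - j) * key

end CommRing

theorem Polynomial.coeff_sum_C_mul_one_add_X_pow {R : Type*} [Semiring R] (a : ℕ → R) (n k : ℕ) :
    (∑ j ∈ range (n + 1), C (a j) * (1 + X) ^ j).coeff k = ∑ j ∈ Icc k n, a j * j.choose k := by
  simp only [finsetSum_coeff, coeff_C_mul, coeff_one_add_X_pow]
  refine (sum_subset (fun j hj => ?_) fun j _ hj => ?_).symm
  · simp only [mem_Icc, mem_range] at hj ⊢; omega
  · rw [Nat.choose_eq_zero_of_lt (by simp_all [mem_Icc]), Nat.cast_zero, mul_zero]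

theorem Polynomial.eq_of_eval_half_add_inv_eq {P Q : ℝ[X]}
    (hPQ : ∀ x : ℝ, 0 < x → P.eval ((x + x⁻¹) / 2) = Q.eval ((x + x⁻¹) / 2)) : P = Q := by
  refine eq_of_infinite_eval_eq P Q (Set.Infinite.mono ?_ (Set.infinite_of_not_bddAbove
    (s := (fun x : ℝ => (x + x⁻¹) / 2) '' Set.Ioi 0) ?_))
  · rintro _ ⟨x, hx, rfl⟩
    exact hPQ x hx
  · rintro ⟨M, hM⟩
    have hx : (0 : ℝ) < 2 * |M| + 2 := by positivity
    have := hM ⟨_, hx, rfl⟩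
    linarith [inv_pos.2 hx, le_abs_self M]

/-- Let `d` be even and `h 0, …, h d` a palindromic sequence of reals with gamma vector
`γ 0, …, γ (d/2)` (so that `∑ h k t^k = ∑ γ i t^i (1+t)^(d-2i)`).  Then for every
`0 ≤ k ≤ d/2`, the coefficient of `w^k` in
`g(2w) = h (d/2) + 2 ∑_{j=1}^{d/2} h (d/2-j) · T_j(w)` equals
`∑_{j=k}^{d/2} γ (d/2-j) · 2^j · (j choose k)`. -/
theorem gamma_chebyshev_coeff
    (d : ℕ) (hd : Even d) (h γ : ℕ → ℝ)
    (hsym : ∀ k ≤ d, h k = h (d - k))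
    (hgamma : ∑ k ∈ Finset.range (d + 1), C (h k) * X ^ k
      = ∑ i ∈ Finset.range (d / 2 + 1), C (γ i) * X ^ i * (1 + X) ^ (d - 2 * i)) :
    ∀ k ≤ d / 2,
      (C (h (d / 2)) +
          2 * ∑ j ∈ Finset.Icc 1 (d / 2),
            C (h (d / 2 - j)) * Polynomial.Chebyshev.T ℝ (j : ℤ)).coeff k
        = ∑ j ∈ Finset.Icc k (d / 2), γ (d / 2 - j) * 2 ^ j * (Nat.choose j k) := by
  obtain ⟨n, rfl⟩ : ∃ n, d = 2 * n := hd.exists_two_nsmul d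
  rw [Nat.mul_div_cancel_left n two_pos] at hgamma ⊢
  intro k _
  suffices hPQ : C (h n) + 2 * ∑ j ∈ Icc 1 n, C (h (n - j)) * Chebyshev.T ℝ (j : ℤ)
      = ∑ j ∈ range (n + 1), C (γ (n - j) * 2 ^ j) * (1 + X) ^ j by
    rw [hPQ, coeff_sum_C_mul_one_add_X_pow]
  refine eq_of_eval_half_add_inv_eq fun x hx => mul_left_cancel₀ (pow_ne_zero n hx.ne') ?_
  have hxy : x * x⁻¹ = 1 := mul_inv_cancel₀ hx.ne'
  have hw : 2 * ((x + x⁻¹) / 2) = x + x⁻¹ := mul_div_cancel₀ _ two_ne_zero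
  rw [pow_mul_eval_chebyshev_sum h hsym hxy hw, pow_mul_eval_sum_one_add_X_pow γ n hxy hw]
  simpa [eval_finsetSum] using congrArg (eval x) hgamma
end

section
/- Let S be a simplicial complex on a vertex set V disjoint from {1,…,d}, let d be a natural number with 2|F| ≤ d for every F ∈ S, and let Γ := B(S,d) be the associated Boolean-decomposed complex. Let a,b ∈ V with e := {a,b} ∈ S, and let v be a vertex lying neither in V nor in {1,…,d}. Then the edge subdivision of Γ at e (with new vertex v) decomposes as sd_e(Γ) = { F′ ∪ G : F′ ∈ sd_e(S), (v ∉ F′ or F′ ∩ {a,b} ≠ ∅), G ⊆ [d − 2|F′|] } ∪ { F′ ∪ G : F′ ∈ sd_e(S), v ∈ F′, F′ ∩ {a,b} = ∅, G ⊆ [d − 2|F′| − 2] }, where sd_e(S) is the edge subdivision of S at e with the same new vertex v. In particular, sd_e(Γ) admits a generalized Boolean decomposition built from sd_e(S). -/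
open Finset

/-- A (finite, abstract) simplicial complex on a subset of `ℕ`: a finite collection of finite
sets containing the empty set and closed under taking subsets. -/
def IsSimplicialComplex (S : Finset (Finset ℕ)) : Prop :=
  ∅ ∈ S ∧ ∀ σ ∈ S, ∀ τ ⊆ σ, τ ∈ S

/-- The vertex set of a complex: the union of its faces. -/
def vertexSet (S : Finset (Finset ℕ)) : Finset ℕ := S.sup id

/-- The Boolean-decomposed complex `B(S,d) = { F ∪ G : F ∈ S, G ⊆ [d - 2|F|] }`,
where `[m] = {1,…,m}`. -/
def boolDecomp (S : Finset (Finset ℕ)) (d : ℕ) : Finset (Finset ℕ) :=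
  S.biUnion fun F => (Finset.Icc 1 (d - 2 * F.card)).powerset.image fun G => F ∪ G

/-- Edge (stellar) subdivision of `Γ` at the edge `e = {a,b}`, with new vertex `v`:
`sd_e(Γ) = {σ ∈ Γ : ¬ e ⊆ σ} ∪ {(σ∖{a})∪{v} : e ⊆ σ ∈ Γ} ∪ {(σ∖{b})∪{v} : e ⊆ σ ∈ Γ}
∪ {(σ∖{a,b})∪{v} : e ⊆ σ ∈ Γ}`. -/
def edgeSubdiv (Γ : Finset (Finset ℕ)) (a b v : ℕ) : Finset (Finset ℕ) :=
  Γ.filter (fun σ => ¬ ({a, b} : Finset ℕ) ⊆ σ)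
    ∪ (Γ.filter fun σ => ({a, b} : Finset ℕ) ⊆ σ).image (fun σ => insert v (σ.erase a))
    ∪ (Γ.filter fun σ => ({a, b} : Finset ℕ) ⊆ σ).image (fun σ => insert v (σ.erase b))
    ∪ (Γ.filter fun σ => ({a, b} : Finset ℕ) ⊆ σ).image
        (fun σ => insert v ((σ.erase a).erase b))

lemma mem_edgeSubdiv {Γ : Finset (Finset ℕ)} {a b v : ℕ} {σ : Finset ℕ} :
    σ ∈ edgeSubdiv Γ a b v ↔
      (σ ∈ Γ ∧ ¬ ({a,b} : Finset ℕ) ⊆ σ) ∨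
      (∃ τ ∈ Γ, ({a,b} : Finset ℕ) ⊆ τ ∧ σ = insert v (τ.erase a)) ∨
      (∃ τ ∈ Γ, ({a,b} : Finset ℕ) ⊆ τ ∧ σ = insert v (τ.erase b)) ∨
      (∃ τ ∈ Γ, ({a,b} : Finset ℕ) ⊆ τ ∧ σ = insert v ((τ.erase a).erase b)) := by
  simp only [edgeSubdiv, Finset.mem_union, Finset.mem_image, Finset.mem_filter]
  constructor
  · rintro (((h | ⟨τ, ⟨h1, h2⟩, h3⟩) | ⟨τ, ⟨h1, h2⟩, h3⟩) | ⟨τ, ⟨h1, h2⟩, h3⟩)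
    · exact Or.inl h
    · exact Or.inr (Or.inl ⟨τ, h1, h2, h3.symm⟩)
    · exact Or.inr (Or.inr (Or.inl ⟨τ, h1, h2, h3.symm⟩))
    · exact Or.inr (Or.inr (Or.inr ⟨τ, h1, h2, h3.symm⟩))
  · rintro (h | ⟨τ, h1, h2, h3⟩ | ⟨τ, h1, h2, h3⟩ | ⟨τ, h1, h2, h3⟩)
    · exact Or.inl (Or.inl (Or.inl h))
    · exact Or.inl (Or.inl (Or.inr ⟨τ, ⟨h1, h2⟩, h3.symm⟩))
    · exact Or.inl (Or.inr ⟨τ, ⟨h1, h2⟩, h3.symm⟩)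
    · exact Or.inr ⟨τ, ⟨h1, h2⟩, h3.symm⟩

lemma mem_boolDecomp {S : Finset (Finset ℕ)} {d : ℕ} {σ : Finset ℕ} :
    σ ∈ boolDecomp S d ↔ ∃ F ∈ S, ∃ G, G ⊆ Finset.Icc 1 (d - 2*F.card) ∧ σ = F ∪ G := by
  simp only [boolDecomp, Finset.mem_biUnion, Finset.mem_image, Finset.mem_powerset]
  constructor
  · rintro ⟨F, hF, G, hG, h⟩; exact ⟨F, hF, G, hG, h.symm⟩
  · rintro ⟨F, hF, G, hG, h⟩; exact ⟨F, hF, G, hG, h.symm⟩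

/-- If `e = {a,b}` is an edge of `S` itself, then the edge subdivision of `Γ = B(S,d)` at `e`
decomposes as
`sd_e(Γ) = { F' ∪ G : F' ∈ sd_e(S), (v ∉ F' or F' ∩ {a,b} ≠ ∅), G ⊆ [d - 2|F'|] }
  ∪ { F' ∪ G : F' ∈ sd_e(S), v ∈ F', F' ∩ {a,b} = ∅, G ⊆ [d - 2|F'| - 2] }`,
a generalized Boolean decomposition built from `sd_e(S)`. -/
theorem edgeSubdiv_boolDecomp_edge_in_S
    (S : Finset (Finset ℕ)) (d : ℕ)
    (hS : IsSimplicialComplex S)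
    (hdisj : Disjoint (vertexSet S) (Finset.Icc 1 d))
    (hdim : ∀ F ∈ S, 2 * F.card ≤ d)
    (a b v : ℕ) (hab : a ≠ b)
    (he : ({a, b} : Finset ℕ) ∈ S)
    (hvV : v ∉ vertexSet S) (hvd : v ∉ Finset.Icc 1 d) :
    edgeSubdiv (boolDecomp S d) a b v =
      ((edgeSubdiv S a b v).filter
            (fun F' => v ∉ F' ∨ F' ∩ ({a, b} : Finset ℕ) ≠ ∅)).biUnion
          (fun F' => (Finset.Icc 1 (d - 2 * F'.card)).powerset.image fun G => F' ∪ G)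
        ∪
      ((edgeSubdiv S a b v).filter
            (fun F' => v ∈ F' ∧ F' ∩ ({a, b} : Finset ℕ) = ∅)).biUnion
          (fun F' => (Finset.Icc 1 (d - 2 * F'.card - 2)).powerset.image fun G => F' ∪ G) := by
  classical
  have hmemV : ∀ {F : Finset ℕ}, F ∈ S → ∀ {x : ℕ}, x ∈ F → x ∈ vertexSet S := by
    intro F hF x hx; exact Finset.mem_sup.2 ⟨F, hF, hx⟩
  have haV : a ∈ vertexSet S := hmemV he (by simp)
  have hbV : b ∈ vertexSet S := hmemV he (by simp)
  have hnotIcc : ∀ {x : ℕ}, x ∈ vertexSet S → x ∉ Finset.Icc 1 d := by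
    intro x hx hx'; exact (Finset.disjoint_left.1 hdisj) hx hx'
  have hvF : ∀ {F : Finset ℕ}, F ∈ S → v ∉ F := fun hF hv => hvV (hmemV hF hv)
  have hva : v ≠ a := fun h => hvV (h ▸ haV)
  have hvb : v ≠ b := fun h => hvV (h ▸ hbV)
  -- facts about G's
  have hIccMono : ∀ k : ℕ, Finset.Icc 1 (d - k) ⊆ Finset.Icc 1 d :=
    fun k => Finset.Icc_subset_Icc_right (Nat.sub_le d k)
  have haG : ∀ {G : Finset ℕ}, G ⊆ Finset.Icc 1 d → a ∉ G :=
    fun hG ha => hnotIcc haV (hG ha)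
  have hbG : ∀ {G : Finset ℕ}, G ⊆ Finset.Icc 1 d → b ∉ G :=
    fun hG hb => hnotIcc hbV (hG hb)
  have hvG : ∀ {G : Finset ℕ}, G ⊆ Finset.Icc 1 d → v ∉ G := fun hG hv => hvd (hG hv)
  -- key rewriting identities
  have keyA : ∀ {F G : Finset ℕ}, a ∉ G →
      insert v (F.erase a) ∪ G = insert v ((F ∪ G).erase a) := by
    intro F G hA
    rw [Finset.insert_union, Finset.erase_union_distrib, Finset.erase_eq_of_notMem hA]
  have keyB : ∀ {F G : Finset ℕ}, b ∉ G →
      insert v (F.erase b) ∪ G = insert v ((F ∪ G).erase b) := by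
    intro F G hB
    rw [Finset.insert_union, Finset.erase_union_distrib, Finset.erase_eq_of_notMem hB]
  have keyAB : ∀ {F G : Finset ℕ}, a ∉ G → b ∉ G →
      insert v ((F.erase a).erase b) ∪ G = insert v (((F ∪ G).erase a).erase b) := by
    intro F G hA hB
    rw [Finset.insert_union, Finset.erase_union_distrib, Finset.erase_eq_of_notMem hA,
      Finset.erase_union_distrib, Finset.erase_eq_of_notMem hB]
  -- cardinality identities
  have cardA : ∀ {F : Finset ℕ}, F ∈ S → a ∈ F → (insert v (F.erase a)).card = F.card := by
    intro F hF haF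
    rw [Finset.card_insert_of_notMem (fun h => hvF hF (Finset.mem_of_mem_erase h)),
      Finset.card_erase_of_mem haF]
    have : 1 ≤ F.card := Finset.card_pos.2 ⟨a, haF⟩
    omega
  have cardB : ∀ {F : Finset ℕ}, F ∈ S → b ∈ F → (insert v (F.erase b)).card = F.card := by
    intro F hF hbF
    rw [Finset.card_insert_of_notMem (fun h => hvF hF (Finset.mem_of_mem_erase h)),
      Finset.card_erase_of_mem hbF]
    have : 1 ≤ F.card := Finset.card_pos.2 ⟨b, hbF⟩
    omega
  have cardAB : ∀ {F : Finset ℕ}, F ∈ S → a ∈ F → b ∈ F →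
      (insert v ((F.erase a).erase b)).card = F.card - 1 := by
    intro F hF haF hbF
    rw [Finset.card_insert_of_notMem
        (fun h => hvF hF (Finset.mem_of_mem_erase (Finset.mem_of_mem_erase h))),
      Finset.card_erase_of_mem (Finset.mem_erase.2 ⟨fun h => hab h.symm, hbF⟩),
      Finset.card_erase_of_mem haF]
    have : 2 ≤ F.card := Finset.one_lt_card.2 ⟨a, haF, b, hbF, hab⟩
    omega
  -- inter with {a,b} is empty for the doubly-erased sets
  have interAB : ∀ {F : Finset ℕ},
      insert v ((F.erase a).erase b) ∩ ({a, b} : Finset ℕ) = ∅ := by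
    intro F
    apply Finset.eq_empty_iff_forall_notMem.2
    intro x hx
    rcases Finset.mem_inter.1 hx with ⟨hx1, hx2⟩
    rcases Finset.mem_insert.1 hx1 with h | h
    · subst h
      rcases Finset.mem_insert.1 hx2 with h | h
      · exact hva h
      · exact hvb (Finset.mem_singleton.1 h)
    · rcases Finset.mem_insert.1 hx2 with h' | h'
      · exact (Finset.mem_erase.1 (Finset.mem_of_mem_erase h)).1 h'
      · exact (Finset.mem_erase.1 h).1 (Finset.mem_singleton.1 h')
  ext σ
  rw [mem_edgeSubdiv]
  simp only [Finset.mem_union, Finset.mem_biUnion, Finset.mem_filter, Finset.mem_image,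
    Finset.mem_powerset]
  constructor
  · rintro (⟨hσΓ, hne⟩ | ⟨τ, hτΓ, heτ, rfl⟩ | ⟨τ, hτΓ, heτ, rfl⟩ | ⟨τ, hτΓ, heτ, rfl⟩)
    · -- case 1: σ ∈ Γ, ¬ e ⊆ σ
      obtain ⟨F, hF, G, hG, rfl⟩ := mem_boolDecomp.1 hσΓ
      refine Or.inl ⟨F, ⟨?_, Or.inl (hvF hF)⟩, G, hG, rfl⟩
      exact mem_edgeSubdiv.2 (Or.inl ⟨hF, fun h => hne (h.trans Finset.subset_union_left)⟩)
    · -- case 2: erase a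
      obtain ⟨F, hF, G, hG, rfl⟩ := mem_boolDecomp.1 hτΓ
      have hGd : G ⊆ Finset.Icc 1 d := hG.trans (hIccMono _)
      have haF : a ∈ F := by
        have := heτ (Finset.mem_insert_self a {b})
        rcases Finset.mem_union.1 this with h | h
        · exact h
        · exact absurd h (haG hGd)
      have hbF : b ∈ F := by
        have := heτ (by simp : b ∈ ({a, b} : Finset ℕ))
        rcases Finset.mem_union.1 this with h | h
        · exact h
        · exact absurd h (hbG hGd)
      have heF : ({a, b} : Finset ℕ) ⊆ F := by
        intro x hx
        rcases Finset.mem_insert.1 hx with h | h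
        · exact h ▸ haF
        · exact (Finset.mem_singleton.1 h) ▸ hbF
      refine Or.inl ⟨insert v (F.erase a), ⟨?_, Or.inr ?_⟩, G, ?_, keyA (haG hGd)⟩
      · exact mem_edgeSubdiv.2 (Or.inr (Or.inl ⟨F, hF, heF, rfl⟩))
      · exact Finset.ne_empty_of_mem (Finset.mem_inter.2
          ⟨Finset.mem_insert_of_mem (Finset.mem_erase.2 ⟨fun h => hab h.symm, hbF⟩), by simp⟩)
      · rwa [cardA hF haF]
    · -- case 3: erase b
      obtain ⟨F, hF, G, hG, rfl⟩ := mem_boolDecomp.1 hτΓ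
      have hGd : G ⊆ Finset.Icc 1 d := hG.trans (hIccMono _)
      have haF : a ∈ F := by
        have := heτ (Finset.mem_insert_self a {b})
        rcases Finset.mem_union.1 this with h | h
        · exact h
        · exact absurd h (haG hGd)
      have hbF : b ∈ F := by
        have := heτ (by simp : b ∈ ({a, b} : Finset ℕ))
        rcases Finset.mem_union.1 this with h | h
        · exact h
        · exact absurd h (hbG hGd)
      have heF : ({a, b} : Finset ℕ) ⊆ F := by
        intro x hx
        rcases Finset.mem_insert.1 hx with h | h
        · exact h ▸ haF
        · exact (Finset.mem_singleton.1 h) ▸ hbF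
      refine Or.inl ⟨insert v (F.erase b), ⟨?_, Or.inr ?_⟩, G, ?_, keyB (hbG hGd)⟩
      · exact mem_edgeSubdiv.2 (Or.inr (Or.inr (Or.inl ⟨F, hF, heF, rfl⟩)))
      · exact Finset.ne_empty_of_mem (Finset.mem_inter.2
          ⟨Finset.mem_insert_of_mem (Finset.mem_erase.2 ⟨hab, haF⟩), by simp⟩)
      · rwa [cardB hF hbF]
    · -- case 4: erase both
      obtain ⟨F, hF, G, hG, rfl⟩ := mem_boolDecomp.1 hτΓ
      have hGd : G ⊆ Finset.Icc 1 d := hG.trans (hIccMono _)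
      have haF : a ∈ F := by
        have := heτ (Finset.mem_insert_self a {b})
        rcases Finset.mem_union.1 this with h | h
        · exact h
        · exact absurd h (haG hGd)
      have hbF : b ∈ F := by
        have := heτ (by simp : b ∈ ({a, b} : Finset ℕ))
        rcases Finset.mem_union.1 this with h | h
        · exact h
        · exact absurd h (hbG hGd)
      have heF : ({a, b} : Finset ℕ) ⊆ F := by
        intro x hx
        rcases Finset.mem_insert.1 hx with h | h
        · exact h ▸ haF
        · exact (Finset.mem_singleton.1 h) ▸ hbF
      refine Or.inr ⟨insert v ((F.erase a).erase b),
        ⟨?_, Finset.mem_insert_self v _, interAB⟩, G, ?_, keyAB (haG hGd) (hbG hGd)⟩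
      · exact mem_edgeSubdiv.2 (Or.inr (Or.inr (Or.inr ⟨F, hF, heF, rfl⟩)))
      · rw [cardAB hF haF hbF]
        have h2 : 2 ≤ F.card := Finset.one_lt_card.2 ⟨a, haF, b, hbF, hab⟩
        have : d - 2 * (F.card - 1) - 2 = d - 2 * F.card := by omega
        rwa [this]
  · rintro (⟨F', ⟨hF'mem, hcond⟩, G, hG, rfl⟩ | ⟨F', ⟨hF'mem, hv', hinter⟩, G, hG, rfl⟩)
    · -- first branch of RHS
      rcases mem_edgeSubdiv.1 hF'mem with ⟨hF', hne⟩ | ⟨F, hF, heF, rfl⟩ |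
        ⟨F, hF, heF, rfl⟩ | ⟨F, hF, heF, rfl⟩
      · -- F' ∈ S, ¬ e ⊆ F'
        have hGd : G ⊆ Finset.Icc 1 d := hG.trans (hIccMono _)
        refine Or.inl ⟨mem_boolDecomp.2 ⟨F', hF', G, hG, rfl⟩, ?_⟩
        intro h
        apply hne
        intro x hx
        rcases Finset.mem_insert.1 hx with hx' | hx'
        · subst hx'
          rcases Finset.mem_union.1 (h hx) with h' | h'
          · exact h'
          · exact absurd h' (haG hGd)
        · rw [Finset.mem_singleton.1 hx']
          rcases Finset.mem_union.1 (h (show b ∈ ({a,b} : Finset ℕ) by simp)) with h' | h'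
          · exact h'
          · exact absurd h' (hbG hGd)
      · -- F' = insert v (F.erase a)
        have haF : a ∈ F := heF (Finset.mem_insert_self a {b})
        rw [cardA hF haF] at hG
        have hGd : G ⊆ Finset.Icc 1 d := hG.trans (hIccMono _)
        exact Or.inr (Or.inl ⟨F ∪ G, mem_boolDecomp.2 ⟨F, hF, G, hG, rfl⟩,
          heF.trans Finset.subset_union_left, keyA (haG hGd)⟩)
      · -- F' = insert v (F.erase b)
        have hbF : b ∈ F := heF (by simp)
        rw [cardB hF hbF] at hG
        have hGd : G ⊆ Finset.Icc 1 d := hG.trans (hIccMono _)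
        exact Or.inr (Or.inr (Or.inl ⟨F ∪ G, mem_boolDecomp.2 ⟨F, hF, G, hG, rfl⟩,
          heF.trans Finset.subset_union_left, keyB (hbG hGd)⟩))
      · -- F' = insert v ((F.erase a).erase b): contradicts the filter
        exfalso
        rcases hcond with h | h
        · exact h (Finset.mem_insert_self v _)
        · exact h interAB
    · -- second branch of RHS
      rcases mem_edgeSubdiv.1 hF'mem with ⟨hF', hne⟩ | ⟨F, hF, heF, rfl⟩ |
        ⟨F, hF, heF, rfl⟩ | ⟨F, hF, heF, rfl⟩
      · exact absurd hv' (hvF hF')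
      · -- contradicts inter = ∅ : b ∈ F' ∩ {a,b}
        exfalso
        have hbF : b ∈ F := heF (by simp)
        have : b ∈ insert v (F.erase a) ∩ ({a, b} : Finset ℕ) :=
          Finset.mem_inter.2
            ⟨Finset.mem_insert_of_mem (Finset.mem_erase.2 ⟨fun h => hab h.symm, hbF⟩), by simp⟩
        rw [hinter] at this
        exact Finset.notMem_empty _ this
      · exfalso
        have haF : a ∈ F := heF (Finset.mem_insert_self a {b})
        have : a ∈ insert v (F.erase b) ∩ ({a, b} : Finset ℕ) :=
          Finset.mem_inter.2
            ⟨Finset.mem_insert_of_mem (Finset.mem_erase.2 ⟨hab, haF⟩), by simp⟩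
        rw [hinter] at this
        exact Finset.notMem_empty _ this
      · -- the main case
        have haF : a ∈ F := heF (Finset.mem_insert_self a {b})
        have hbF : b ∈ F := heF (by simp)
        rw [cardAB hF haF hbF] at hG
        have h2 : 2 ≤ F.card := Finset.one_lt_card.2 ⟨a, haF, b, hbF, hab⟩
        have heq : d - 2 * (F.card - 1) - 2 = d - 2 * F.card := by omega
        rw [heq] at hG
        have hGd : G ⊆ Finset.Icc 1 d := hG.trans (hIccMono _)
        exact Or.inr (Or.inr (Or.inr ⟨F ∪ G, mem_boolDecomp.2 ⟨F, hF, G, hG, rfl⟩,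
          heF.trans Finset.subset_union_left, keyAB (haG hGd) (hbG hGd)⟩))
end

section
/- Let S be a simplicial complex on a vertex set V disjoint from {1,…,d}, let d be a natural number with 2|F| ≤ d for every F ∈ S, and let Γ := B(S,d). Let a ∈ V with {a} ∈ S, let b ∈ {1,…,d−2}, set e := {a,b} (which is an edge of Γ), and let v be a vertex lying neither in V nor in {1,…,d}. Then the edge subdivision of Γ at e decomposes as the union of the following four families: { F ∪ G : F ∈ S, G ⊆ [d − 2|F|], ¬(a ∈ F and b ∈ G) }, { ((F∖{a})∪{v}) ∪ G : F ∈ S, a ∈ F, G ⊆ [d − 2|F|], b ∈ G }, { F ∪ ((G∖{b})∪{v}) : F ∈ S, a ∈ F, G ⊆ [d − 2|F|], b ∈ G }, and { (F∖{a}) ∪ (G∖{b}) ∪ {v} : F ∈ S, a ∈ F, G ⊆ [d − 2|F|], b ∈ G }. -/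
open Finset

/-- If `a` is a vertex of `S` and `b ∈ {1,…,d-2}`, so that `e = {a,b}` is an edge of
`Γ = B(S,d)`, then the edge subdivision of `Γ` at `e` decomposes as the union of four
families:
`{ F ∪ G : F ∈ S, G ⊆ [d-2|F|], ¬(a ∈ F ∧ b ∈ G) }`,
`{ ((F∖{a})∪{v}) ∪ G : F ∈ S, a ∈ F, G ⊆ [d-2|F|], b ∈ G }`,
`{ F ∪ ((G∖{b})∪{v}) : F ∈ S, a ∈ F, G ⊆ [d-2|F|], b ∈ G }`, and
`{ (F∖{a}) ∪ (G∖{b}) ∪ {v} : F ∈ S, a ∈ F, G ⊆ [d-2|F|], b ∈ G }`. -/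
theorem edgeSubdiv_boolDecomp_mixed_edge
    (S : Finset (Finset ℕ)) (d : ℕ)
    (hS : IsSimplicialComplex S)
    (hdisj : Disjoint (vertexSet S) (Finset.Icc 1 d))
    (hdim : ∀ F ∈ S, 2 * F.card ≤ d)
    (a b v : ℕ)
    (ha : ({a} : Finset ℕ) ∈ S)
    (hb : b ∈ Finset.Icc 1 (d - 2))
    (hvV : v ∉ vertexSet S) (hvd : v ∉ Finset.Icc 1 d) :
    edgeSubdiv (boolDecomp S d) a b v =
      (S.biUnion fun F =>
          (((Finset.Icc 1 (d - 2 * F.card)).powerset.filter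
              (fun G => ¬(a ∈ F ∧ b ∈ G))).image fun G => F ∪ G))
        ∪
      ((S.filter fun F => a ∈ F).biUnion fun F =>
          (((Finset.Icc 1 (d - 2 * F.card)).powerset.filter (fun G => b ∈ G)).image
            fun G => (insert v (F.erase a)) ∪ G))
        ∪
      ((S.filter fun F => a ∈ F).biUnion fun F =>
          (((Finset.Icc 1 (d - 2 * F.card)).powerset.filter (fun G => b ∈ G)).image
            fun G => F ∪ (insert v (G.erase b))))
        ∪
      ((S.filter fun F => a ∈ F).biUnion fun F =>
          (((Finset.Icc 1 (d - 2 * F.card)).powerset.filter (fun G => b ∈ G)).image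
            fun G => (F.erase a) ∪ (G.erase b) ∪ {v})) := by
  -- basic facts
  have hsub : ∀ F ∈ S, ∀ x ∈ F, x ∉ Finset.Icc 1 d := by
    intro F hF x hx hxI
    exact Finset.disjoint_left.mp hdisj (Finset.mem_sup.mpr ⟨F, hF, hx⟩) hxI
  have hIccsub : ∀ m, Finset.Icc 1 (d - m) ⊆ Finset.Icc 1 d :=
    fun m => Finset.Icc_subset_Icc_right (Nat.sub_le d m)
  have hbI : b ∈ Finset.Icc 1 d := hIccsub 2 hb
  have haI : a ∉ Finset.Icc 1 d := hsub {a} ha a (Finset.mem_singleton_self a)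
  have haG : ∀ F : Finset ℕ, ∀ G ⊆ Finset.Icc 1 (d - 2 * F.card), a ∉ G :=
    fun F G hG hmem => haI (hIccsub _ (hG hmem))
  have hbF : ∀ F ∈ S, b ∉ F := fun F hF hmem => hsub F hF b hmem hbI
  -- membership in F ∪ G
  have hmemab : ∀ F ∈ S, ∀ G ⊆ Finset.Icc 1 (d - 2 * F.card),
      (({a, b} : Finset ℕ) ⊆ F ∪ G ↔ a ∈ F ∧ b ∈ G) := by
    intro F hF G hG
    rw [Finset.insert_subset_iff, Finset.singleton_subset_iff, Finset.mem_union,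
      Finset.mem_union]
    constructor
    · rintro ⟨h1 | h1, h2 | h2⟩
      · exact ⟨h1, absurd h2 (hbF F hF)⟩
      · exact ⟨h1, h2⟩
      · exact absurd h1 (haG F G hG)
      · exact absurd h1 (haG F G hG)
    · rintro ⟨h1, h2⟩; exact ⟨Or.inl h1, Or.inr h2⟩
  unfold edgeSubdiv
  have h1 : (boolDecomp S d).filter (fun σ => ¬ ({a, b} : Finset ℕ) ⊆ σ) =
      S.biUnion fun F =>
          (((Finset.Icc 1 (d - 2 * F.card)).powerset.filter
              (fun G => ¬(a ∈ F ∧ b ∈ G))).image fun G => F ∪ G) := by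
    ext σ
    simp only [boolDecomp, Finset.mem_filter, Finset.mem_biUnion, Finset.mem_image,
      Finset.mem_powerset]
    constructor
    · rintro ⟨⟨F, hF, G, hG, rfl⟩, hn⟩
      exact ⟨F, hF, G, ⟨hG, fun h => hn ((hmemab F hF G hG).mpr h)⟩, rfl⟩
    · rintro ⟨F, hF, G, ⟨hG, hn⟩, rfl⟩
      exact ⟨⟨F, hF, G, hG, rfl⟩, fun h => hn ((hmemab F hF G hG).mp h)⟩
  have h2 : ((boolDecomp S d).filter fun σ => ({a, b} : Finset ℕ) ⊆ σ).image
        (fun σ => insert v (σ.erase a)) =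
      (S.filter fun F => a ∈ F).biUnion fun F =>
          (((Finset.Icc 1 (d - 2 * F.card)).powerset.filter (fun G => b ∈ G)).image
            fun G => (insert v (F.erase a)) ∪ G) := by
    ext σ
    simp only [boolDecomp, Finset.mem_filter, Finset.mem_biUnion, Finset.mem_image,
      Finset.mem_powerset]
    constructor
    · rintro ⟨τ, ⟨⟨F, hF, G, hG, rfl⟩, hab⟩, rfl⟩
      obtain ⟨h1, h2⟩ := (hmemab F hF G hG).mp hab
      refine ⟨F, ⟨hF, h1⟩, G, ⟨hG, h2⟩, ?_⟩
      rw [Finset.erase_union_distrib, Finset.erase_eq_of_notMem (haG F G hG),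
        Finset.insert_union]
    · rintro ⟨F, ⟨hF, h1⟩, G, ⟨hG, h2⟩, rfl⟩
      refine ⟨F ∪ G, ⟨⟨F, hF, G, hG, rfl⟩, (hmemab F hF G hG).mpr ⟨h1, h2⟩⟩, ?_⟩
      rw [Finset.erase_union_distrib, Finset.erase_eq_of_notMem (haG F G hG),
        Finset.insert_union]
  have h3 : ((boolDecomp S d).filter fun σ => ({a, b} : Finset ℕ) ⊆ σ).image
        (fun σ => insert v (σ.erase b)) =
      (S.filter fun F => a ∈ F).biUnion fun F =>
          (((Finset.Icc 1 (d - 2 * F.card)).powerset.filter (fun G => b ∈ G)).image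
            fun G => F ∪ (insert v (G.erase b))) := by
    ext σ
    simp only [boolDecomp, Finset.mem_filter, Finset.mem_biUnion, Finset.mem_image,
      Finset.mem_powerset]
    constructor
    · rintro ⟨τ, ⟨⟨F, hF, G, hG, rfl⟩, hab⟩, rfl⟩
      obtain ⟨h1, h2⟩ := (hmemab F hF G hG).mp hab
      refine ⟨F, ⟨hF, h1⟩, G, ⟨hG, h2⟩, ?_⟩
      rw [Finset.erase_union_distrib, Finset.erase_eq_of_notMem (hbF F hF),
        Finset.union_insert]
    · rintro ⟨F, ⟨hF, h1⟩, G, ⟨hG, h2⟩, rfl⟩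
      refine ⟨F ∪ G, ⟨⟨F, hF, G, hG, rfl⟩, (hmemab F hF G hG).mpr ⟨h1, h2⟩⟩, ?_⟩
      rw [Finset.erase_union_distrib, Finset.erase_eq_of_notMem (hbF F hF),
        Finset.union_insert]
  have h4 : ((boolDecomp S d).filter fun σ => ({a, b} : Finset ℕ) ⊆ σ).image
        (fun σ => insert v ((σ.erase a).erase b)) =
      (S.filter fun F => a ∈ F).biUnion fun F =>
          (((Finset.Icc 1 (d - 2 * F.card)).powerset.filter (fun G => b ∈ G)).image
            fun G => (F.erase a) ∪ (G.erase b) ∪ {v}) := by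
    ext σ
    simp only [boolDecomp, Finset.mem_filter, Finset.mem_biUnion, Finset.mem_image,
      Finset.mem_powerset]
    have key : ∀ F : Finset ℕ, ∀ G ⊆ Finset.Icc 1 (d - 2 * F.card),
        F ∈ S → insert v (((F ∪ G).erase a).erase b) = F.erase a ∪ G.erase b ∪ {v} := by
      intro F G hG hF
      rw [Finset.erase_union_distrib, Finset.erase_eq_of_notMem (haG F G hG),
        Finset.erase_union_distrib, Finset.erase_eq_of_notMem
          (fun h => hbF F hF (Finset.mem_of_mem_erase h)),
        Finset.insert_eq, Finset.union_comm ({v} : Finset ℕ)]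
    constructor
    · rintro ⟨τ, ⟨⟨F, hF, G, hG, rfl⟩, hab⟩, rfl⟩
      obtain ⟨h1, h2⟩ := (hmemab F hF G hG).mp hab
      exact ⟨F, ⟨hF, h1⟩, G, ⟨hG, h2⟩, (key F G hG hF).symm⟩
    · rintro ⟨F, ⟨hF, h1⟩, G, ⟨hG, h2⟩, rfl⟩
      exact ⟨F ∪ G, ⟨⟨F, hF, G, hG, rfl⟩, (hmemab F hF G hG).mpr ⟨h1, h2⟩⟩, key F G hG hF⟩
  rw [h1, h2, h3, h4]
end

section
/- Let S be a simplicial complex whose vertex set is disjoint from {1,…,d}, and suppose 2|F| ≤ d − 1 for every face F ∈ S. Then for every k ≥ 1, f_{k−1}(B(S,d)) = f_{k−1}(B(S,d−1)) + f_{k−2}(B(S,d−1)). In other words, the Boolean-decomposed complex B(S,d) has the same f-vector as the cone over B(S,d−1), so the cone over a complex with a Boolean decomposition (with parameter d−1) has its f-vector realized by a complex with a Boolean decomposition (with parameter d). -/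
open Finset

/-- `faceCount Δ k` is the number of faces of `Δ` of cardinality `k`,
i.e. `f_{k-1}(Δ)` in the usual indexing. -/
def faceCount (Δ : Finset (Finset ℕ)) (k : ℕ) : ℕ :=
  (Δ.filter fun σ => σ.card = k).card

lemma recover_sdiff (F G : Finset ℕ) (d : ℕ) (hF : Disjoint F (Finset.Icc 1 d))
    (hG : G ⊆ Finset.Icc 1 d) : (F ∪ G) \ Finset.Icc 1 d = F := by
  rw [union_sdiff_distrib, sdiff_eq_self_of_disjoint hF, sdiff_eq_empty_iff_subset.2 hG,
    union_empty]

lemma recover_inter (F G : Finset ℕ) (d : ℕ) (hF : Disjoint F (Finset.Icc 1 d))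
    (hG : G ⊆ Finset.Icc 1 d) : (F ∪ G) ∩ Finset.Icc 1 d = G := by
  rw [union_inter_distrib_right, disjoint_iff_inter_eq_empty.1 hF, inter_eq_left.2 hG,
    empty_union]

lemma faceCount_boolDecomp (S : Finset (Finset ℕ)) (d k : ℕ)
    (h : ∀ F ∈ S, Disjoint F (Finset.Icc 1 d)) :
    faceCount (boolDecomp S d) k
      = ∑ F ∈ S, if F.card ≤ k then (d - 2 * F.card).choose (k - F.card) else 0 := by
  have hsub : ∀ F : Finset ℕ, Finset.Icc 1 (d - 2 * F.card) ⊆ Finset.Icc 1 d :=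
    fun F => Finset.Icc_subset_Icc_right (Nat.sub_le _ _)
  unfold faceCount boolDecomp
  rw [filter_biUnion, card_biUnion]
  · refine Finset.sum_congr rfl fun F hF => ?_
    have hFd := h F hF
    rw [Finset.filter_image, Finset.card_image_of_injOn]
    · by_cases hck : F.card ≤ k
      · have heq : ((Finset.Icc 1 (d - 2 * F.card)).powerset.filter
            (fun G => (F ∪ G).card = k))
            = (Finset.Icc 1 (d - 2 * F.card)).powersetCard (k - F.card) := by
          rw [Finset.powersetCard_eq_filter]
          apply Finset.filter_congr
          intro G hG
          simp only [Finset.mem_powerset] at hG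
          have hdj : Disjoint F G := Finset.disjoint_of_subset_right (hG.trans (hsub F)) hFd
          rw [Finset.card_union_of_disjoint hdj]
          constructor <;> intro <;> omega
        rw [heq, Finset.card_powersetCard, Nat.card_Icc]
        simp [hck]
      · rw [Finset.filter_eq_empty_iff.2, Finset.card_empty, if_neg hck]
        intro G hG
        simp only [Finset.mem_powerset] at hG
        have hdj : Disjoint F G := Finset.disjoint_of_subset_right (hG.trans (hsub F)) hFd
        rw [Finset.card_union_of_disjoint hdj]
        omega
    · intro G₁ h₁ G₂ h₂ hGG
      simp only [coe_filter, Set.mem_setOf_eq, Finset.mem_powerset] at h₁ h₂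
      have e₁ := recover_inter F G₁ d hFd (h₁.1.trans (hsub F))
      have e₂ := recover_inter F G₂ d hFd (h₂.1.trans (hsub F))
      rw [← e₁, ← e₂]
      exact congrArg (· ∩ Finset.Icc 1 d) hGG
  · intro F₁ h₁ F₂ h₂ hne
    simp only [Finset.disjoint_left]
    intro σ hσ₁ hσ₂
    simp only [Finset.mem_filter, Finset.mem_image, Finset.mem_powerset] at hσ₁ hσ₂
    obtain ⟨⟨G₁, hG₁, rfl⟩, -⟩ := hσ₁
    obtain ⟨⟨G₂, hG₂, he⟩, -⟩ := hσ₂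
    apply hne
    have e₁ := recover_sdiff F₁ G₁ d (h F₁ h₁) (hG₁.trans (hsub F₁))
    have e₂ := recover_sdiff F₂ G₂ d (h F₂ h₂) (hG₂.trans (hsub F₂))
    rw [← e₁, ← e₂, he]

/-- If `2|F| ≤ d - 1` for every face `F` of `S`, then for every `k ≥ 1`,
`f_{k-1}(B(S,d)) = f_{k-1}(B(S,d-1)) + f_{k-2}(B(S,d-1))`: the Boolean-decomposed
complex `B(S,d)` has the same `f`-vector as the cone over `B(S,d-1)`. -/
theorem boolDecomp_cone_faceCount
    (S : Finset (Finset ℕ)) (d : ℕ) (hd : 1 ≤ d)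
    (hS : IsSimplicialComplex S)
    (hdisj : Disjoint (vertexSet S) (Finset.Icc 1 d))
    (hdim : ∀ F ∈ S, 2 * F.card ≤ d - 1) :
    ∀ k, 1 ≤ k →
      faceCount (boolDecomp S d) k
        = faceCount (boolDecomp S (d - 1)) k + faceCount (boolDecomp S (d - 1)) (k - 1) := by
  intro k hk
  have hF : ∀ F ∈ S, Disjoint F (Finset.Icc 1 d) := by
    intro F hFS
    exact Finset.disjoint_of_subset_left (Finset.le_sup (f := id) hFS) hdisj
  have hF' : ∀ F ∈ S, Disjoint F (Finset.Icc 1 (d - 1)) := fun F hFS =>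
    Finset.disjoint_of_subset_right (Finset.Icc_subset_Icc_right (Nat.sub_le _ _)) (hF F hFS)
  rw [faceCount_boolDecomp S d k hF, faceCount_boolDecomp S (d-1) k hF',
    faceCount_boolDecomp S (d-1) (k-1) hF', ← Finset.sum_add_distrib]
  refine Finset.sum_congr rfl fun F hFS => ?_
  have hm := hdim F hFS
  set c := F.card with hc
  rcases lt_trichotomy c k with hck | hck | hck
  · rw [if_pos hck.le, if_pos hck.le, if_pos (by omega)]
    have h1 : d - 2 * c = (d - 1 - 2 * c) + 1 := by omega
    have h2 : k - c = (k - 1 - c) + 1 := by omega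
    have h3 : k - 1 - c = (k - c) - 1 := by omega
    rw [h1, h2, Nat.choose_succ_succ]
    simp only [Nat.succ_eq_add_one, ← h2]
    omega
  · rw [if_pos hck.le, if_pos hck.le, if_neg (by omega)]
    have : k - c = 0 := by omega
    rw [this, Nat.choose_zero_right, Nat.choose_zero_right]
  · rw [if_neg (by omega), if_neg (by omega), if_neg (by omega)]
end

section
/- Let d be an even natural number, D := d/2, and let Γ be a (D−1)-dimensional simplicial complex on a vertex set V, balanced via a map c : V → {1,…,D} that is injective on every face. Set h_i := f_{i−1}(Γ) for 0 ≤ i ≤ D (for instance, h could be the h-vector of a flag simplicial homology sphere of dimension d realized as the f-vector of a balanced complex Γ), and define P(u) := h_D + 2·Σ_{j=1}^{D} h_{D−j}·u^j ∈ ℚ[u]. Then the following identity holds in ℚ[α]: (P(2α+1) + f_{D−1}(Γ))/2 − Σ_{j=0}^{D} f_{D−j−1}(Γ) + 1 = Σ_{k=0}^{D} f_{k−1}(D(Γ))·α^k, where f_{k−1}(D(Γ)) is the number of (k−1)-faces of the signed unused color complex of Γ and f_{−1}(D(Γ)) = 1. -/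
open Finset

/-- The set of `(k-1)`-dimensional faces of the signed unused color complex `D(Γ)` of a
balanced complex `Γ` with coloring `c` into `{1,…,D}`: triples `(F, Q, B)` with `F ∈ Γ`,
`Q ⊆ C_F = {1,…,D} ∖ c(F)`, `|Q| = k`, and `B ⊆ Q`. -/
def signedUnusedFaces (Γ : Finset (Finset ℕ)) (c : ℕ → ℕ) (D k : ℕ) :
    Finset (Finset ℕ × Finset ℕ × Finset ℕ) :=
  Γ.biUnion fun F =>
    ((Finset.Icc 1 D \ F.image c).powersetCard k).biUnion fun Q =>
      Q.powerset.image fun B => (F, Q, B)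

lemma range_succ_eq_insert (D : ℕ) : Finset.range (D + 1) = insert 0 (Finset.Icc 1 D) := by
  ext x; simp [Finset.mem_range, Finset.mem_Icc]; omega

lemma signedUnusedFaces_card (Γ : Finset (Finset ℕ)) (c : ℕ → ℕ) (D k : ℕ)
    (hcol : ∀ F ∈ Γ, ∀ x ∈ F, c x ∈ Finset.Icc 1 D)
    (hinj : ∀ F ∈ Γ, Set.InjOn c (F : Set ℕ)) :
    (signedUnusedFaces Γ c D k).card = ∑ F ∈ Γ, (D - F.card).choose k * 2 ^ k := by
  unfold signedUnusedFaces
  rw [Finset.card_biUnion]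
  · refine Finset.sum_congr rfl fun F hF => ?_
    rw [Finset.card_biUnion]
    · have hsub : F.image c ⊆ Finset.Icc 1 D := by
        intro x hx
        obtain ⟨y, hy, rfl⟩ := Finset.mem_image.1 hx
        exact hcol F hF y hy
      have hcard : (Finset.Icc 1 D \ F.image c).card = D - F.card := by
        rw [Finset.card_sdiff_of_subset hsub, Finset.card_image_of_injOn (hinj F hF)]
        simp [Nat.card_Icc]
      have : ∀ Q ∈ (Finset.Icc 1 D \ F.image c).powersetCard k,
          (Q.powerset.image fun B => (F, Q, B)).card = 2 ^ k := by
        intro Q hQ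
        rw [Finset.card_image_of_injective _ (fun a b hab => by
          simpa using congrArg (fun p => p.2.2) hab)]
        rw [Finset.card_powerset, (Finset.mem_powersetCard.1 hQ).2]
      rw [Finset.sum_congr rfl this, Finset.sum_const, Finset.card_powersetCard, hcard,
        smul_eq_mul]
    · intro Q hQ Q' hQ' hne
      simp only [Finset.disjoint_left, Finset.mem_image, Finset.mem_powerset]
      rintro x ⟨B, hB, rfl⟩ ⟨B', hB', heq⟩
      exact hne (congrArg (fun p => p.2.1) heq).symm
  · intro F hF F' hF' hne
    simp only [Finset.disjoint_left, Finset.mem_biUnion, Finset.mem_image]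
    rintro x ⟨Q, hQ, B, hB, rfl⟩ ⟨Q', hQ', B', hB', heq⟩
    exact hne (congrArg (fun p => p.1) heq).symm

lemma sum_by_card (Γ : Finset (Finset ℕ)) (D : ℕ) (hdim : ∀ F ∈ Γ, F.card ≤ D)
    (g : ℕ → ℕ) :
    ∑ F ∈ Γ, g F.card = ∑ i ∈ Finset.range (D + 1), faceCount Γ i * g i := by
  rw [← Finset.sum_fiberwise_of_maps_to (fun F hF => Finset.mem_range.2 (Nat.lt_succ_of_le (hdim F hF)))
    (fun F => g F.card)]
  refine Finset.sum_congr rfl fun i _ => ?_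
  rw [Finset.sum_congr rfl (fun F hF => by rw [(Finset.mem_filter.1 hF).2]),
    Finset.sum_const, smul_eq_mul]
  rfl

open Polynomial in
/-- Let `d` be even, `D = d/2`, and `Γ` a `(D-1)`-dimensional balanced simplicial complex.
Set `h i = f_{i-1}(Γ)` and `P(u) = h_D + 2 ∑_{j=1}^{D} h_{D-j} u^j`.  Then in `ℚ[α]`:
`(P(2α+1) + f_{D-1}(Γ))/2 - ∑_{j=0}^{D} f_{D-j-1}(Γ) + 1 = ∑_{k=0}^{D} f_{k-1}(D(Γ)) α^k`,
where `f_{k-1}(D(Γ))` counts the `(k-1)`-faces of the signed unused color complex and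
`f_{-1}(D(Γ)) = 1`. -/
theorem signedUnusedColorComplex_poly_identity
    (d D : ℕ) (hd : Even d) (hDd : D = d / 2) (hD : 1 ≤ D)
    (Γ : Finset (Finset ℕ))
    (hΓ : IsSimplicialComplex Γ)
    (hdim : ∀ F ∈ Γ, F.card ≤ D) (hpure : ∃ F ∈ Γ, F.card = D)
    (c : ℕ → ℕ)
    (hcol : ∀ F ∈ Γ, ∀ x ∈ F, c x ∈ Finset.Icc 1 D)
    (hinj : ∀ F ∈ Γ, Set.InjOn c (F : Set ℕ)) :
    C (1 / 2 : ℚ) *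
        ((C ((faceCount Γ D : ℚ)) +
            2 * ∑ j ∈ Finset.Icc 1 D, C ((faceCount Γ (D - j) : ℚ)) * X ^ j).comp
              (2 * X + 1)
          + C ((faceCount Γ D : ℚ)))
      - C (∑ j ∈ Finset.range (D + 1), ((faceCount Γ (D - j) : ℚ)))
      + 1
      = ∑ k ∈ Finset.range (D + 1),
          C (if k = 0 then (1 : ℚ) else ((signedUnusedFaces Γ c D k).card : ℚ)) * X ^ k := by
  classical
  have cardQ : ∀ k ∈ Finset.Icc 1 D, ((signedUnusedFaces Γ c D k).card : ℚ)
      = ∑ j ∈ Finset.Icc k D, (faceCount Γ (D - j) : ℚ) * ((j.choose k : ℚ) * 2 ^ k) := by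
    intro k hk
    obtain ⟨hk1, hkD⟩ := Finset.mem_Icc.1 hk
    rw [signedUnusedFaces_card Γ c D k hcol hinj,
        sum_by_card Γ D hdim (fun i => (D - i).choose k * 2 ^ k)]
    push_cast
    rw [show (∑ j ∈ Finset.Icc k D, (faceCount Γ (D - j) : ℚ) * ((j.choose k : ℚ) * 2 ^ k))
        = ∑ j ∈ Finset.range (D + 1), (faceCount Γ (D - j) : ℚ) * ((j.choose k : ℚ) * 2 ^ k) from
      Finset.sum_subset
        (fun j hj => by simp only [Finset.mem_Icc, Finset.mem_range] at hj ⊢; omega)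
        (fun j hj hj2 => by
          simp only [Finset.mem_Icc, Finset.mem_range] at hj hj2
          rw [Nat.choose_eq_zero_of_lt (by omega)]; push_cast; ring)]
    conv_rhs => rw [← Finset.sum_range_reflect
        (fun j => (faceCount Γ (D - j) : ℚ) * ((j.choose k : ℚ) * 2 ^ k)) (D + 1)]
    refine Finset.sum_congr rfl fun i hi => ?_
    simp only [Finset.mem_range] at hi
    have h1 : D + 1 - 1 - i = D - i := by omega
    have h2 : D - (D - i) = i := by omega
    rw [h1, h2]
  have binom : ∀ j : ℕ, ((2 * X + 1 : ℚ[X])) ^ j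
      = 1 + ∑ k ∈ Finset.Icc 1 j, C ((j.choose k : ℚ) * 2 ^ k) * X ^ k := by
    intro j
    rw [add_pow, range_succ_eq_insert j, Finset.sum_insert (by simp)]
    simp only [pow_zero, one_pow, one_mul, Nat.choose_zero_right, Nat.cast_one, mul_one]
    congr 1
    refine Finset.sum_congr rfl fun k hk => ?_
    rw [Polynomial.C_mul, Polynomial.C_pow]
    have hc : (Polynomial.C ((j.choose k : ℚ))) = ((j.choose k : ℚ[X])) := by simp
    have h2 : (Polynomial.C (2 : ℚ)) = (2 : ℚ[X]) := by exact_mod_cast map_ofNat Polynomial.C 2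
    rw [hc, h2]; ring
  have comp_eq : ((C ((faceCount Γ D : ℚ)) +
        2 * ∑ j ∈ Finset.Icc 1 D, C ((faceCount Γ (D - j) : ℚ)) * X ^ j).comp (2 * X + 1))
      = C ((faceCount Γ D : ℚ)) +
        2 * ∑ j ∈ Finset.Icc 1 D, C ((faceCount Γ (D - j) : ℚ)) * (2 * X + 1) ^ j := by
    simp
  rw [comp_eq]
  have hsplit : ∑ j ∈ Finset.Icc 1 D, C ((faceCount Γ (D - j) : ℚ)) * (2 * X + 1) ^ j
      = (∑ j ∈ Finset.Icc 1 D, C ((faceCount Γ (D - j) : ℚ)))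
        + ∑ k ∈ Finset.Icc 1 D, C (((signedUnusedFaces Γ c D k).card : ℚ)) * X ^ k := by
    rw [Finset.sum_congr rfl (fun j _ => by rw [binom j, mul_add, mul_one, Finset.mul_sum])]
    rw [Finset.sum_add_distrib]
    congr 1
    rw [Finset.sum_comm' (t' := Finset.Icc 1 D) (s' := fun k => Finset.Icc k D)
        (by intro j k; simp only [Finset.mem_Icc]; omega)]
    refine Finset.sum_congr rfl fun k hk => ?_
    rw [cardQ k hk, map_sum, Finset.sum_mul]
    refine Finset.sum_congr rfl fun j hj => ?_
    simp only [Polynomial.C_mul]; ring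
  rw [hsplit]
  rw [range_succ_eq_insert D,
      Finset.sum_insert (show (0:ℕ) ∉ Finset.Icc 1 D by simp),
      Finset.sum_insert (show (0:ℕ) ∉ Finset.Icc 1 D by simp)]
  have hifs : ∑ k ∈ Finset.Icc 1 D,
        C (if k = 0 then (1:ℚ) else ((signedUnusedFaces Γ c D k).card : ℚ)) * X ^ k
      = ∑ k ∈ Finset.Icc 1 D, C (((signedUnusedFaces Γ c D k).card : ℚ)) * X ^ k :=
    Finset.sum_congr rfl fun k hk => by
      rw [if_neg (by simp only [Finset.mem_Icc] at hk; omega)]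
  rw [hifs]
  rw [if_pos rfl]
  simp only [Nat.sub_zero, pow_zero, mul_one, map_one, map_add, map_sum]
  have h2 : (Polynomial.C ((1:ℚ)/2)) * 2 = (1 : ℚ[X]) := by
    rw [show (2:ℚ[X]) = Polynomial.C 2 from (by exact_mod_cast map_ofNat Polynomial.C 2 : Polynomial.C (2:ℚ) = 2).symm, ← Polynomial.C_mul]; norm_num
  linear_combination (C ((faceCount Γ D : ℚ))
      + (∑ j ∈ Finset.Icc 1 D, C ((faceCount Γ (D - j) : ℚ)))
      + ∑ k ∈ Finset.Icc 1 D, C (((signedUnusedFaces Γ c D k).card : ℚ)) * X ^ k) * h2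
end

section
/- Let A be a finite collection of nonempty finite subsets of a linearly ordered finite set V, and let T(A) be its Tchebyshev triangulation. Then for every k ≥ 1, 2·f_{k−1}(T(A)) = Σ_{j=k}^{2k} s_j(A)·2^{2k−j}·( C(k,2k−j) + C(k−1,2k−j) ), where C(·,·) denotes binomial coefficients; equivalently, f_{k−1}(T(A)) = Σ_{j=k}^{2k} s_j(A)·2^{2k−j−1}·( C(k,2k−j) + C(k−1,2k−j) ). -/
open Finset

/-- The set of vertices of the original complex underlying a vertex `(u, v)` of the
Tchebyshev triangulation: `{u, v} ∖ {1̂}`, where `1̂ = ⊤`. -/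
def pairVertexSet {α : Type*} [DecidableEq α] (p : α × WithTop α) : Finset α :=
  WithTop.recTopCoe {p.1} (fun a => {p.1, a}) p.2

/-- The `(k-1)`-dimensional faces of the Tchebyshev triangulation `T(A)` of a collection `A`
of nonempty finite subsets of a linearly ordered set `V`: sets
`{(u_1,v_1),…,(u_k,v_k)}` with `u_i ∈ V`, `v_i ∈ V ∪ {1̂}`, `u_i < v_i`, `v_1 < ⋯ < v_k`,
such that `{u_1,v_1,…,u_k,v_k} ∖ {1̂} ∈ A`, and for each `i ≤ k-1` either `u_i = u_{i+1}`
or `v_i ≤ u_{i+1}`. -/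
def tchebFaces {α : Type*} [LinearOrder α] [DecidableEq α]
    (A : Finset (Finset α)) (k : ℕ) : Set (Finset (α × WithTop α)) :=
  {σ | ∃ e : Fin k → α × WithTop α,
      σ = Finset.image e Finset.univ ∧
      StrictMono (fun i => (e i).2) ∧
      (∀ i, ((e i).1 : WithTop α) < (e i).2) ∧
      (Finset.univ.biUnion fun i => pairVertexSet (e i)) ∈ A ∧
      (∀ i j : Fin k, (i : ℕ) + 1 = (j : ℕ) →
        (e i).1 = (e j).1 ∨ (e i).2 ≤ ((e j).1 : WithTop α))}

/-- `s_j(A)`: the number of members of `A` of cardinality `j`. -/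
def sCount {α : Type*} [DecidableEq α] (A : Finset (Finset α)) (j : ℕ) : ℕ :=
  (A.filter fun F => F.card = j).card

/-!
Write a face as its sequence of pairs `(u₁, v₁), …, (uₖ, vₖ)`. Every vertex other than `u₁` is
at least `v₁`, so `u₁ < v₁` are the two least elements `a < b` of the support `F`. Dropping the
first pair leaves a face of one dimension less with support `F ∖ {b}` (if `u₂ = a`), `F ∖ {a}`
(if `u₂ = b`) or `F ∖ {a, b}` (if `u₂ > b`), and prepending `(a, b)` undoes this. So the number
`N(d, j)` of `d`-faces with a given support of size `j` satisfies
`N(d + 1, j + 2) = 2 N(d, j + 1) + N(d, j)`, with `N(0, j) = 1` exactly for `j ∈ {1, 2}`, and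
Pascal's rule turns this recursion into the closed form.
-/

section Support

variable {α : Type*} [DecidableEq α] {n k : ℕ}

def seqSupport (e : Fin k → α × WithTop α) : Finset α :=
  univ.biUnion fun i => pairVertexSet (e i)

theorem mem_pairVertexSet {p : α × WithTop α} {a : α} :
    a ∈ pairVertexSet p ↔ a = p.1 ∨ (a : WithTop α) = p.2 := by
  obtain ⟨u, v⟩ := p
  cases v using WithTop.recTopCoe <;> simp [pairVertexSet]

theorem pairVertexSet_top (u : α) : pairVertexSet (u, ⊤) = {u} := rfl

theorem pairVertexSet_coe (u c : α) : pairVertexSet (u, ↑c) = {u, c} := rfl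

theorem mem_seqSupport {e : Fin k → α × WithTop α} {a : α} :
    a ∈ seqSupport e ↔ ∃ i, a = (e i).1 ∨ (a : WithTop α) = (e i).2 := by
  simp [seqSupport, mem_pairVertexSet]

theorem fst_zero_mem_seqSupport (e : Fin (n + 1) → α × WithTop α) : (e 0).1 ∈ seqSupport e :=
  mem_seqSupport.2 ⟨0, .inl rfl⟩

theorem seqSupport_cons (p : α × WithTop α) (e : Fin n → α × WithTop α) :
    seqSupport (Fin.cons p e : Fin (n + 1) → α × WithTop α) = pairVertexSet p ∪ seqSupport e := by
  ext a
  simp [mem_seqSupport, mem_pairVertexSet, Fin.exists_fin_succ]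

theorem seqSupport_of_fin_one (e : Fin 1 → α × WithTop α) :
    seqSupport e = pairVertexSet (e 0) := by
  simp [seqSupport]

end Support

section TchebSeq

variable {α : Type*} [LinearOrder α] {n k : ℕ}

structure IsTchebSeq (e : Fin k → α × WithTop α) : Prop where
  snd_strictMono : StrictMono fun i => (e i).2
  fst_lt_snd : ∀ i, ((e i).1 : WithTop α) < (e i).2
  chain : ∀ i j : Fin k, (i : ℕ) + 1 = j →
    (e i).1 = (e j).1 ∨ (e i).2 ≤ ((e j).1 : WithTop α)

theorem isTchebSeq_cons {p : α × WithTop α} {e : Fin (n + 1) → α × WithTop α} :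
    IsTchebSeq (Fin.cons p e : Fin (n + 2) → α × WithTop α) ↔
      ((p.1 : WithTop α) < p.2 ∧ p.2 < (e 0).2 ∧ (p.1 = (e 0).1 ∨ p.2 ≤ (e 0).1)) ∧
        IsTchebSeq e := by
  have hsnd : (fun i => ((Fin.cons p e : Fin (n + 2) → α × WithTop α) i).2) =
      Fin.cons p.2 fun i => (e i).2 := by
    ext i; cases i using Fin.cases <;> rfl
  constructor
  · intro h
    refine ⟨⟨h.fst_lt_snd 0, h.snd_strictMono (Fin.succ_pos 0), h.chain 0 1 rfl⟩,
      ⟨?_, fun i => h.fst_lt_snd i.succ, fun i j hij => h.chain i.succ j.succ (by simpa)⟩⟩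
    exact (Fin.strictMono_cons.1 (hsnd ▸ h.snd_strictMono)).2
  · rintro ⟨⟨h0, h1, h2⟩, he⟩
    refine ⟨?_, Fin.cases h0 he.fst_lt_snd, ?_⟩
    · rw [hsnd, Fin.strictMono_cons]
      exact ⟨fun j => h1.trans_le (he.snd_strictMono.monotone (Fin.zero_le j)), he.snd_strictMono⟩
    · intro i j hij
      cases i using Fin.cases with
      | zero => obtain rfl : j = 1 := Fin.ext hij.symm; exact h2
      | succ i =>
        cases j using Fin.cases with
        | zero => simp at hij
        | succ j => exact he.chain i j (by simpa using hij)

theorem isTchebSeq_iff_of_fin_one {e : Fin 1 → α × WithTop α} :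
    IsTchebSeq e ↔ ((e 0).1 : WithTop α) < (e 0).2 := by
  refine ⟨fun he => he.fst_lt_snd 0, fun h => ⟨Subsingleton.strictMono _, ?_, ?_⟩⟩
  · exact fun i => Subsingleton.elim i 0 ▸ h
  · intro i j hij; omega

end TchebSeq

namespace IsTchebSeq

variable {α : Type*} [LinearOrder α] {n : ℕ}

theorem fst_eq_or_snd_zero_le {e : Fin (n + 1) → α × WithTop α} (he : IsTchebSeq e)
    (i : Fin (n + 1)) : (e i).1 = (e 0).1 ∨ (e 0).2 ≤ ((e i).1 : WithTop α) := by
  induction i using Fin.induction with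
  | zero => exact .inl rfl
  | succ i ih =>
    rcases he.chain i.castSucc i.succ (by simp) with h | h
    · exact h ▸ ih
    · exact .inr ((he.snd_strictMono.monotone (Fin.zero_le _)).trans h)

variable [DecidableEq α]

theorem eq_or_snd_zero_le_of_mem {e : Fin (n + 1) → α × WithTop α} (he : IsTchebSeq e) {x : α}
    (hx : x ∈ seqSupport e) : x = (e 0).1 ∨ (e 0).2 ≤ (x : WithTop α) := by
  obtain ⟨i, rfl | hi⟩ := mem_seqSupport.1 hx
  · exact he.fst_eq_or_snd_zero_le i
  · exact .inr (hi ▸ he.snd_strictMono.monotone (Fin.zero_le i))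

theorem fst_zero_le_of_mem {e : Fin (n + 1) → α × WithTop α} (he : IsTchebSeq e) {x : α}
    (hx : x ∈ seqSupport e) : (e 0).1 ≤ x := by
  rcases he.eq_or_snd_zero_le_of_mem hx with rfl | h
  · rfl
  · exact WithTop.coe_le_coe.1 ((he.fst_lt_snd 0).le.trans h)

theorem two_le_card_seqSupport {e : Fin (n + 2) → α × WithTop α} (he : IsTchebSeq e) :
    2 ≤ #(seqSupport e) := by
  obtain ⟨c, hc⟩ := WithTop.ne_top_iff_exists.1 (he.snd_strictMono (Fin.succ_pos 0)).ne_top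
  have hsub : {(e 0).1, c} ⊆ seqSupport e := insert_subset_iff.2
    ⟨fst_zero_mem_seqSupport e, singleton_subset_iff.2 (mem_seqSupport.2 ⟨0, .inr hc⟩)⟩
  calc 2 = #({(e 0).1, c} : Finset α) :=
        (card_pair (WithTop.coe_lt_coe.1 (hc ▸ he.fst_lt_snd 0)).ne).symm
    _ ≤ _ := card_le_card hsub

theorem apply_zero_eq {e : Fin (n + 2) → α × WithTop α} (he : IsTchebSeq e) {F : Finset α}
    {a b : α} (hsupp : seqSupport e = F) (ha : a ∈ F) (hb : b ∈ F) (hab : a < b)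
    (hbF : ∀ x ∈ F, x ≠ a → b ≤ x) : e 0 = (a, ↑b) := by
  subst hsupp
  obtain ⟨c, hc⟩ := WithTop.ne_top_iff_exists.1 (he.snd_strictMono (Fin.succ_pos 0)).ne_top
  have hua : (e 0).1 = a := by
    refine le_antisymm (he.fst_zero_le_of_mem ha) ?_
    by_contra! h
    exact (hbF _ (fst_zero_mem_seqSupport e) h.ne).not_gt (h.trans hab)
  have hltc : (e 0).1 < c := WithTop.coe_lt_coe.1 (hc ▸ he.fst_lt_snd 0)
  have hcb : c = b := by
    refine le_antisymm ?_ (hbF c (mem_seqSupport.2 ⟨0, .inr hc⟩) (hua ▸ hltc.ne'))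
    rcases he.eq_or_snd_zero_le_of_mem hb with h | h
    · exact absurd (h.trans hua) hab.ne'
    · exact WithTop.coe_le_coe.1 (hc ▸ h)
  exact Prod.ext hua (hc.symm.trans (congrArg _ hcb))

end IsTchebSeq

theorem exists_two_least {α : Type*} [LinearOrder α] {F : Finset α} (hF : 2 ≤ #F) :
    ∃ a ∈ F, ∃ b ∈ F, a < b ∧ ∀ x ∈ F, x ≠ a → b ≤ x := by
  have hF₀ : F.Nonempty := card_pos.1 (by omega)
  have hF₁ : (F.erase (F.min' hF₀)).Nonempty :=
    card_pos.1 (by rw [card_erase_of_mem (F.min'_mem hF₀)]; omega)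
  have hb := mem_of_mem_erase ((F.erase _).min'_mem hF₁)
  exact ⟨_, F.min'_mem hF₀, _, hb,
    lt_of_le_of_ne (F.min'_le _ hb) (min'_erase_ne_self hF₁).symm,
    fun x hx hxa => (F.erase _).min'_le x (mem_erase.2 ⟨hxa, hx⟩)⟩

section Recursion

variable {α : Type*} [LinearOrder α] [DecidableEq α] {n : ℕ} {F : Finset α} {a b : α}

theorem seqSupport_mem_of_isTchebSeq_cons (hab : a < b) {e : Fin (n + 1) → α × WithTop α}
    (he : IsTchebSeq (Fin.cons (a, ↑b) e : Fin (n + 2) → α × WithTop α))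
    (hsupp : seqSupport (Fin.cons (a, ↑b) e : Fin (n + 2) → α × WithTop α) = F) :
    seqSupport e ∈ ({F.erase b, F.erase a, (F.erase a).erase b} : Finset _) := by
  rw [seqSupport_cons, pairVertexSet_coe] at hsupp
  obtain ⟨⟨-, hbv, hchain⟩, he⟩ := isTchebSeq_cons.1 he
  have hlt : ∀ x, x = a ∨ x = b → (x : WithTop α) < (e 0).2 := by
    rintro x (rfl | rfl)
    · exact (WithTop.coe_lt_coe.2 hab).trans hbv
    · exact hbv
  have hmem_iff : ∀ x, x ∈ seqSupport e ↔ x ∈ F ∧ (x ≠ a ∧ x ≠ b ∨ x = (e 0).1) := by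
    refine fun x => ⟨fun hx => ⟨hsupp ▸ mem_union_right _ hx, ?_⟩, ?_⟩
    · rcases he.eq_or_snd_zero_le_of_mem hx with h | h
      · exact .inr h
      · exact .inl (not_or.1 fun hx' => (hlt x hx').not_ge h)
    · rintro ⟨hxF, h | h⟩
      · rw [← hsupp] at hxF
        simpa [h.1, h.2] using hxF
      · exact h ▸ fst_zero_mem_seqSupport e
  simp only [mem_insert, mem_singleton, Finset.ext_iff, hmem_iff, mem_erase]
  rcases hchain with h | h
  · grind
  · rcases (WithTop.coe_le_coe.1 h).eq_or_lt with h | h <;> grind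

theorem isTchebSeq_cons_of_seqSupport_mem (ha : a ∈ F) (hb : b ∈ F) (hab : a < b)
    (hbF : ∀ x ∈ F, x ≠ a → b ≤ x) {e : Fin (n + 1) → α × WithTop α} (he : IsTchebSeq e)
    (hsupp : seqSupport e ∈ ({F.erase b, F.erase a, (F.erase a).erase b} : Finset _)) :
    IsTchebSeq (Fin.cons (a, ↑b) e : Fin (n + 2) → α × WithTop α) ∧
      seqSupport (Fin.cons (a, ↑b) e : Fin (n + 2) → α × WithTop α) = F := by
  simp only [mem_insert, mem_singleton] at hsupp
  have hsub : seqSupport e ⊆ F := by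
    rcases hsupp with h | h | h <;> rw [h] <;> intro x hx <;> simp_all
  have hcover : F ⊆ {a, b} ∪ seqSupport e := by
    rcases hsupp with h | h | h <;> intro x hx <;> simp_all <;> tauto
  have hnot : ¬(a ∈ seqSupport e ∧ b ∈ seqSupport e) := by
    rcases hsupp with h | h | h <;> simp [h]
  have hu := fst_zero_mem_seqSupport e
  have hchain : a = (e 0).1 ∨ b ≤ (e 0).1 := by
    by_cases h : (e 0).1 = a
    · exact .inl h.symm
    · exact .inr (hbF _ (hsub hu) h)
  rw [isTchebSeq_cons, seqSupport_cons, pairVertexSet_coe]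
  refine ⟨⟨⟨WithTop.coe_lt_coe.2 hab, ?_, hchain.imp_right WithTop.coe_le_coe.2⟩, he⟩,
    (union_subset (by simp [insert_subset_iff, ha, hb]) hsub).antisymm hcover⟩
  induction h : (e 0).2 using WithTop.recTopCoe with
  | top => exact WithTop.coe_lt_top b
  | coe y =>
    have hy : y ∈ seqSupport e := mem_seqSupport.2 ⟨0, .inr h.symm⟩
    have huy : (e 0).1 < y := WithTop.coe_lt_coe.1 (h ▸ he.fst_lt_snd 0)
    refine WithTop.coe_lt_coe.2 (lt_of_le_of_ne ?_ ?_)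
    · refine hbF y (hsub hy) ?_
      rintro rfl
      exact (huy.trans_le (hchain.elim (·.le) (hab.le.trans ·))).false
    · rintro rfl
      exact hnot ⟨(hchain.resolve_right huy.not_ge) ▸ hu, hy⟩

end Recursion

theorem card_pairVertexSet {α : Type*} [LinearOrder α] [DecidableEq α] {p : α × WithTop α}
    (h : (p.1 : WithTop α) < p.2) : #(pairVertexSet p) = 1 ∨ #(pairVertexSet p) = 2 := by
  obtain ⟨u, v⟩ := p
  cases v using WithTop.recTopCoe with
  | top => exact .inl (card_singleton u)
  | coe c => exact .inr (card_pair (WithTop.coe_lt_coe.1 h).ne)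

section Count

open scoped Classical

variable {α : Type*} [LinearOrder α] [DecidableEq α] [Fintype α] {n k : ℕ}

noncomputable def tchebSeqs (k : ℕ) (F : Finset α) : Finset (Fin k → α × WithTop α) :=
  {e | IsTchebSeq e ∧ seqSupport e = F}

theorem mem_tchebSeqs {F : Finset α} {e : Fin k → α × WithTop α} :
    e ∈ tchebSeqs k F ↔ IsTchebSeq e ∧ seqSupport e = F := by
  simp [tchebSeqs]

theorem card_filter_seqSupport_mem (S : Finset (Finset α)) :
    #{e : Fin k → α × WithTop α | IsTchebSeq e ∧ seqSupport e ∈ S} =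
      ∑ F ∈ S, #(tchebSeqs k F) := by
  rw [card_eq_sum_card_fiberwise (f := seqSupport) (t := S) fun e he => (mem_filter.1 he).2.2]
  refine sum_congr rfl fun F hF => congrArg card ?_
  ext e
  simp only [tchebSeqs, mem_filter, mem_univ, true_and]
  exact ⟨fun h => ⟨h.1.1, h.2⟩, fun h => ⟨⟨h.1, h.2 ▸ hF⟩, h.2⟩⟩

theorem card_tchebSeqs_add_two {F : Finset α} {a b : α} (ha : a ∈ F) (hb : b ∈ F) (hab : a < b)
    (hbF : ∀ x ∈ F, x ≠ a → b ≤ x) :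
    #(tchebSeqs (n + 2) F) = #(tchebSeqs (n + 1) (F.erase b)) +
      #(tchebSeqs (n + 1) (F.erase a)) + #(tchebSeqs (n + 1) ((F.erase a).erase b)) := by
  have hcons : Set.LeftInvOn (Fin.cons (n := n + 1) (α := fun _ => α × WithTop α) (a, ↑b))
      Fin.tail (tchebSeqs (n + 2) F : Set (Fin (n + 2) → α × WithTop α)) := fun e he => by
    rw [mem_coe, mem_tchebSeqs] at he
    rw [← he.1.apply_zero_eq he.2 ha hb hab hbF, Fin.cons_self_tail]
  rw [card_nbij' Fin.tail (Fin.cons (a, ↑b)) ?_ ?_ hcons fun e _ => Fin.tail_cons _ _,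
    card_filter_seqSupport_mem, sum_insert, sum_insert, sum_singleton, add_assoc]
  · intro h
    have hbA : b ∈ F.erase a := mem_erase.2 ⟨hab.ne', hb⟩
    rw [mem_singleton.1 h] at hbA
    simp at hbA
  · have haB : a ∈ F.erase b := mem_erase.2 ⟨hab.ne, ha⟩
    simp only [mem_insert, mem_singleton, not_or]
    exact ⟨fun h => by simp [h] at haB, fun h => by simp [h] at haB⟩
  · intro e he
    have hface := mem_tchebSeqs.1 (mem_coe.1 he)
    rw [← hcons he] at hface
    exact mem_coe.2 (mem_filter.2 ⟨mem_univ _, (isTchebSeq_cons.1 hface.1).2,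
      seqSupport_mem_of_isTchebSeq_cons hab hface.1 hface.2⟩)
  · intro e he
    obtain ⟨-, he, hS⟩ := mem_filter.1 (mem_coe.1 he)
    exact mem_coe.2 (mem_tchebSeqs.2 (isTchebSeq_cons_of_seqSupport_mem ha hb hab hbF he hS))

theorem filter_pairVertexSet_eq_singleton (a : α) :
    ({p | (p.1 : WithTop α) < p.2 ∧ pairVertexSet p = {a}} : Finset (α × WithTop α)) =
      {(a, ⊤)} := by
  ext ⟨u, v⟩
  cases v using WithTop.recTopCoe with
  | top => simp [pairVertexSet_top]
  | coe c =>
    simp only [mem_filter, mem_univ, true_and, mem_singleton, Prod.mk.injEq, WithTop.coe_ne_top,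
      and_false, iff_false, not_and]
    intro huc h
    have := congrArg card h
    simp [pairVertexSet_coe, card_pair (WithTop.coe_lt_coe.1 huc).ne] at this

theorem filter_pairVertexSet_eq_pair {a b : α} (hab : a < b) :
    ({p | (p.1 : WithTop α) < p.2 ∧ pairVertexSet p = {a, b}} : Finset (α × WithTop α)) =
      {(a, ↑b)} := by
  ext ⟨u, v⟩
  cases v using WithTop.recTopCoe with
  | top =>
    simp only [mem_filter, mem_univ, true_and, mem_singleton, Prod.mk.injEq, WithTop.top_ne_coe,
      and_false, iff_false, not_and]
    intro _ h
    have := congrArg card h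
    simp [pairVertexSet_top, card_pair hab.ne] at this
  | coe c =>
    simp only [mem_filter, mem_univ, true_and, mem_singleton, Prod.mk.injEq, WithTop.coe_inj,
      WithTop.coe_lt_coe]
    refine ⟨fun ⟨huc, h⟩ => ?_, fun ⟨hu, hc⟩ => ⟨hu ▸ hc ▸ hab, hu ▸ hc ▸ rfl⟩⟩
    have h1 : a ∈ pairVertexSet (u, ↑c) := h ▸ mem_insert_self a {b}
    have h2 : b ∈ pairVertexSet (u, ↑c) := h ▸ mem_insert_of_mem (mem_singleton_self b)
    simp only [pairVertexSet_coe, mem_insert, mem_singleton] at h1 h2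
    grind

theorem card_tchebSeqs_one (F : Finset α) :
    #(tchebSeqs 1 F) = if #F = 1 ∨ #F = 2 then 1 else 0 := by
  have hcard : #(tchebSeqs 1 F) =
      #({p | (p.1 : WithTop α) < p.2 ∧ pairVertexSet p = F} : Finset (α × WithTop α)) := by
    refine card_nbij' (· 0) (fun p _ => p) ?_ ?_ ?_ fun _ _ => rfl
    · intro e he
      simpa [mem_tchebSeqs, isTchebSeq_iff_of_fin_one, seqSupport_of_fin_one] using he
    · intro p hp
      simpa [mem_tchebSeqs, isTchebSeq_iff_of_fin_one, seqSupport_of_fin_one] using hp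
    · intro e _
      funext i
      rw [Subsingleton.elim i 0]
  rw [hcard]
  split_ifs with h
  · rcases h with h | h
    · obtain ⟨a, rfl⟩ := card_eq_one.1 h
      rw [filter_pairVertexSet_eq_singleton, card_singleton]
    · obtain ⟨a, b, hab, rfl⟩ := card_eq_two.1 h
      rcases hab.lt_or_gt with hab | hab
      · rw [filter_pairVertexSet_eq_pair hab, card_singleton]
      · rw [pair_comm, filter_pairVertexSet_eq_pair hab, card_singleton]
  · rw [card_eq_zero, filter_eq_empty_iff]
    rintro p - ⟨hp, rfl⟩
    exact h (card_pairVertexSet hp)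

end Count

def tchebCount : ℕ → ℕ → ℕ
  | 0, j => if j = 1 ∨ j = 2 then 1 else 0
  | _ + 1, 0 | _ + 1, 1 => 0
  | d + 1, j + 2 => 2 * tchebCount d (j + 1) + tchebCount d j

theorem tchebCount_eq_zero {d j : ℕ} (h : j < d + 1 ∨ 2 * d + 2 < j) : tchebCount d j = 0 := by
  induction d generalizing j with
  | zero => simp only [tchebCount]; split_ifs <;> omega
  | succ d ih =>
    match j with
    | 0 | 1 => rfl
    | j + 2 => rw [tchebCount, ih (by omega), ih (by omega)]

theorem two_mul_tchebCount {d j : ℕ} (hj : j ≤ 2 * (d + 1)) :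
    2 * tchebCount d j =
      2 ^ (2 * (d + 1) - j) * ((d + 1).choose (2 * (d + 1) - j) + d.choose (2 * (d + 1) - j)) := by
  induction d generalizing j with
  | zero => interval_cases j <;> rfl
  | succ d ih =>
    match j with
    | 0 | 1 =>
      rw [tchebCount, Nat.choose_eq_zero_of_lt (by omega), Nat.choose_eq_zero_of_lt (by omega)]
      simp
    | j + 2 =>
      rw [tchebCount]
      obtain rfl | hj' := eq_or_lt_of_le (show j ≤ 2 * (d + 1) by omega)
      · rw [tchebCount_eq_zero (by omega), show 2 * (d + 1 + 1) - (2 * (d + 1) + 2) = 0 by omega]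
        simpa using ih le_rfl
      · obtain ⟨m, hm⟩ : ∃ m, 2 * (d + 1) - j = m + 1 := ⟨2 * (d + 1) - j - 1, by omega⟩
        have h1 := ih (j := j + 1) (by omega)
        have h2 := ih (j := j) (by omega)
        rw [show 2 * (d + 1) - (j + 1) = m by omega] at h1
        rw [hm] at h2
        rw [show 2 * (d + 1 + 1) - (j + 2) = m + 1 by omega, Nat.choose_succ_succ' (d + 1) m]
        rw [Nat.choose_succ_succ' d m, pow_succ] at h2 ⊢
        linarith

open scoped Classical in
theorem card_tchebSeqs {α : Type*} [LinearOrder α] [DecidableEq α] [Fintype α] (d : ℕ)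
    (F : Finset α) : #(tchebSeqs (d + 1) F) = tchebCount d #F := by
  induction d generalizing F with
  | zero => rw [card_tchebSeqs_one, tchebCount]
  | succ d ih =>
    obtain hF | hF := lt_or_ge #F 2
    · have hempty : tchebSeqs (d + 2) F = ∅ := eq_empty_of_forall_notMem fun e he => by
        obtain ⟨hseq, rfl⟩ := mem_tchebSeqs.1 he
        exact hseq.two_le_card_seqSupport.not_gt hF
      obtain h | h : #F = 0 ∨ #F = 1 := by omega
      all_goals rw [hempty, h]; rfl
    · obtain ⟨a, ha, b, hb, hab, hbF⟩ := exists_two_least hF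
      obtain ⟨j, hj⟩ : ∃ j, #F = j + 2 := ⟨#F - 2, by omega⟩
      rw [card_tchebSeqs_add_two ha hb hab hbF, ih, ih, ih, card_erase_of_mem hb,
        card_erase_of_mem ha, card_erase_of_mem (mem_erase.2 ⟨hab.ne', hb⟩),
        card_erase_of_mem ha, hj, tchebCount, two_mul]
      rfl

theorem tchebFaces_eq_image {α : Type*} [LinearOrder α] [DecidableEq α]
    (A : Finset (Finset α)) (k : ℕ) :
    tchebFaces A k = (fun e : Fin k → α × WithTop α => univ.image e) ''
      {e | IsTchebSeq e ∧ seqSupport e ∈ A} := by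
  ext σ
  simp only [tchebFaces, Set.mem_ofPred_eq, Set.mem_image, seqSupport]
  constructor
  · rintro ⟨e, rfl, h1, h2, hA, h3⟩
    exact ⟨e, ⟨⟨h1, h2, h3⟩, hA⟩, rfl⟩
  · rintro ⟨e, ⟨⟨h1, h2, h3⟩, hA⟩, rfl⟩
    exact ⟨e, rfl, h1, h2, hA, h3⟩

theorem injOn_image_univ_of_strictMono_comp {β γ : Type*} [DecidableEq β] [LinearOrder γ]
    {k : ℕ} (φ : β → γ) :
    Set.InjOn (fun e : Fin k → β => univ.image e) {e | StrictMono (φ ∘ e)} := by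
  intro e he e' he' h
  have hrange : Set.range e = Set.range e' := by
    have := congrArg (fun s : Finset β => (s : Set β)) h
    simpa only [coe_image, coe_univ, Set.image_univ] using this
  have hφ : φ ∘ e = φ ∘ e' :=
    (StrictMono.range_inj he he').1 (by rw [Set.range_comp, Set.range_comp, hrange])
  funext i
  obtain ⟨j, hj⟩ : e i ∈ Set.range e' := hrange ▸ Set.mem_range_self i
  obtain rfl : j = i := he'.injective (by
    rw [Function.comp_apply, Function.comp_apply, hj]; exact congrFun hφ i)
  exact hj.symm

open scoped Classical in
theorem ncard_tchebFaces {α : Type*} [LinearOrder α] [DecidableEq α] [Fintype α]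
    (A : Finset (Finset α)) (k : ℕ) :
    (tchebFaces A k).ncard = ∑ F ∈ A, #(tchebSeqs k F) := by
  have hinj := (injOn_image_univ_of_strictMono_comp (k := k) (Prod.snd (α := α))).mono
    fun e (he : e ∈ {e | IsTchebSeq e ∧ seqSupport e ∈ A}) => he.1.snd_strictMono
  rw [tchebFaces_eq_image, hinj.ncard_image, ← card_filter_seqSupport_mem, ← Set.ncard_coe_finset]
  congr
  ext
  simp

theorem sum_card_eq_sum_sCount {α : Type*} [DecidableEq α] (A : Finset (Finset α)) (g : ℕ → ℕ)
    {t : Finset ℕ} (hg : ∀ F ∈ A, #F ∉ t → g #F = 0) :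
    ∑ F ∈ A, g #F = ∑ j ∈ t, sCount A j * g j :=
  calc ∑ F ∈ A, g #F = ∑ F ∈ A with #F ∈ t, g #F :=
        (sum_filter_of_ne fun F hF h => by_contra fun ht => h (hg F hF ht)).symm
    _ = ∑ j ∈ t, ∑ F ∈ A with #F = j, g #F := (sum_fiberwise_eq_sum_filter _ _ _ _).symm
    _ = _ := sum_congr rfl fun j _ => sum_const_nat fun F hF => by rw [(mem_filter.1 hF).2]

theorem tchebFaces_count_general {α : Type*} [LinearOrder α] [Fintype α] [DecidableEq α]
    (A : Finset (Finset α)) :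
    ∀ k, 1 ≤ k →
      2 * (tchebFaces A k).ncard
        = ∑ j ∈ Finset.Icc k (2 * k),
            sCount A j * 2 ^ (2 * k - j) *
              (Nat.choose k (2 * k - j) + Nat.choose (k - 1) (2 * k - j)) := by
  intro k hk
  obtain ⟨d, rfl⟩ : ∃ d, k = d + 1 := ⟨k - 1, by omega⟩
  simp_rw [ncard_tchebFaces, card_tchebSeqs, mul_sum]
  rw [sum_card_eq_sum_sCount A (fun j => 2 * tchebCount d j) (t := Icc (d + 1) (2 * (d + 1)))]
  · refine sum_congr rfl fun j hj => ?_
    rw [two_mul_tchebCount (mem_Icc.1 hj).2, Nat.add_sub_cancel, mul_assoc]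
  · intro F _ hF
    rw [tchebCount_eq_zero (by rw [mem_Icc] at hF; omega), mul_zero]

/-- **f-vector of the Tchebyshev triangulation** (Hetyei, generalized to cell complexes).
For a finite collection `A` of nonempty subsets of a linearly ordered finite set and every
`k ≥ 1`:
`2·f_{k-1}(T(A)) = ∑_{j=k}^{2k} s_j(A) · 2^(2k-j) · ( C(k,2k-j) + C(k-1,2k-j) )`. -/
theorem tchebFaces_count {α : Type*} [LinearOrder α] [Fintype α] [DecidableEq α]
    (A : Finset (Finset α)) (hA : ∀ F ∈ A, F ≠ ∅) :
    ∀ k, 1 ≤ k →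
      2 * (tchebFaces A k).ncard
        = ∑ j ∈ Finset.Icc k (2 * k),
            sCount A j * 2 ^ (2 * k - j) *
              (Nat.choose k (2 * k - j) + Nat.choose (k - 1) (2 * k - j)) :=
  tchebFaces_count_general A
end
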